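/- arXiv:1902.06743 — 14 statements merged into one kernel-verified Lean document; each statement's English description precedes it below -/
import Mathlib

section
/- Let σ be an itemset predicate that is monotonically decreasing, i.e., for every dataset S and itemsets Y ⊆ X one has σ(Y; S) ≥ σ(X; S). Then for every binary dataset D and every 0 ≤ α ≤ 1, the robustness r(·; σ, D, α) is monotonically decreasing: for all itemsets Y ⊆ X, r(Y; σ, D, α) ≥ r(X; σ, D, α). -/
open Classical Finset

noncomputable section

/-- A binary dataset: a finite set of transactions, each a pair of an
identifier and a binary vector over the items `A`. -/
abbrev Dataset (A : Type*) := Finset (ℕ × (A → Bool))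

/-- Robustness of the predicate `σ` for the itemset `X` in the dataset `D`
with subsampling parameter `α`. -/
def robustness {A : Type*} (σ : Finset A → Dataset A → Prop)
    (X : Finset A) (D : Dataset A) (α : ℝ) : ℝ :=
  ∑ S ∈ D.powerset.filter (fun S => σ X S),
    α ^ S.card * (1 - α) ^ (D.card - S.card)

/-- if the predicate `σ` is monotonically decreasing in the itemset,
then so is its robustness. -/
theorem robustness_monotonically_decreasing {A : Type*}
    (σ : Finset A → Dataset A → Prop)
    (hσ : ∀ (S : Dataset A) (X Y : Finset A), Y ⊆ X → σ X S → σ Y S)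
    (D : Dataset A) (α : ℝ) (hα0 : 0 ≤ α) (hα1 : α ≤ 1)
    (X Y : Finset A) (hYX : Y ⊆ X) :
    robustness σ X D α ≤ robustness σ Y D α := by
  apply Finset.sum_le_sum_of_subset_of_nonneg
  · intro S hS
    simp only [Finset.mem_filter] at *
    exact ⟨hS.1, hσ S X Y hYX hS.2⟩
  · intro S _ _
    exact mul_nonneg (pow_nonneg hα0 _) (pow_nonneg (by linarith) _)
end
end

section
/- Let σ be an itemset predicate that is monotonic w.r.t. deletion, i.e., for every itemset X, dataset S, and transaction t ∈ S, σ(X; S) = 0 implies σ(X; S \ {t}) = 0. Then for every binary dataset D, every itemset X, and all 0 ≤ α ≤ β ≤ 1, one has r(X; σ, D, α) ≤ r(X; σ, D, β). -/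
open Classical Finset

noncomputable section

/-- Auxiliary robustness with indicator. -/
def rob' {A : Type*} (P : Dataset A → Prop) (D : Dataset A) (α : ℝ) : ℝ :=
  ∑ S ∈ D.powerset,
    (if P S then (1:ℝ) else 0) * (α ^ S.card * (1 - α) ^ (D.card - S.card))

lemma rob'_nonneg {A : Type*} (P : Dataset A → Prop) (D : Dataset A) (α : ℝ)
    (h0 : 0 ≤ α) (h1 : α ≤ 1) : 0 ≤ rob' P D α := by
  apply Finset.sum_nonneg
  intro S _
  have : (0:ℝ) ≤ 1 - α := by linarith
  apply mul_nonneg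
  · split <;> norm_num
  · exact mul_nonneg (pow_nonneg h0 _) (pow_nonneg this _)

lemma rob'_mono_pred {A : Type*} {P Q : Dataset A → Prop} (D : Dataset A) (α : ℝ)
    (h0 : 0 ≤ α) (h1 : α ≤ 1) (hPQ : ∀ S, P S → Q S) :
    rob' P D α ≤ rob' Q D α := by
  apply Finset.sum_le_sum
  intro S _
  have h1a : (0:ℝ) ≤ 1 - α := by linarith
  apply mul_le_mul_of_nonneg_right
  · split_ifs with hp hq
    · norm_num
    · exact absurd (hPQ S hp) hq
    · norm_num
    · norm_num
  · exact mul_nonneg (pow_nonneg h0 _) (pow_nonneg h1a _)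

lemma rob'_insert {A : Type*} (P : Dataset A → Prop) (D : Dataset A)
    (t : ℕ × (A → Bool)) (ht : t ∉ D) (α : ℝ) :
    rob' P (insert t D) α
      = (1 - α) * rob' P D α + α * rob' (fun S => P (insert t S)) D α := by
  unfold rob'
  rw [Finset.sum_powerset_insert ht]
  congr 1
  · rw [Finset.mul_sum]
    apply Finset.sum_congr rfl
    intro S hS
    have hSD : S ⊆ D := Finset.mem_powerset.mp hS
    have hcard : S.card ≤ D.card := Finset.card_le_card hSD
    rw [Finset.card_insert_of_notMem ht]
    have : D.card + 1 - S.card = (D.card - S.card) + 1 := by omega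
    rw [this, pow_succ]
    ring
  · rw [Finset.mul_sum]
    apply Finset.sum_congr rfl
    intro S hS
    have hSD : S ⊆ D := Finset.mem_powerset.mp hS
    have htS : t ∉ S := fun h => ht (hSD h)
    have hcard : S.card ≤ D.card := Finset.card_le_card hSD
    rw [Finset.card_insert_of_notMem ht, Finset.card_insert_of_notMem htS]
    have : D.card + 1 - (S.card + 1) = D.card - S.card := by omega
    rw [this, pow_succ]
    ring

lemma rob'_mono_alpha {A : Type*} (α β : ℝ)
    (h0 : 0 ≤ α) (hαβ : α ≤ β) (h1 : β ≤ 1) :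
    ∀ (D : Dataset A) (P : Dataset A → Prop)
      (_ : ∀ S t, P S → P (insert t S)),
      rob' P D α ≤ rob' P D β := by
  intro D
  induction D using Finset.induction_on with
  | empty =>
    intro P _
    simp [rob']
  | insert _ _ ht ih =>
    rename_i t D'
    intro P hP
    have hQ : ∀ S u, P (insert t S) → P (insert t (insert u S)) := by
      intro S u h
      rw [Finset.insert_comm]
      exact hP _ u h
    have ih0 := ih P hP
    have ih1 := ih (fun S => P (insert t S)) hQ
    have hle : rob' P D' β ≤ rob' (fun S => P (insert t S)) D' β :=
      rob'_mono_pred D' β (le_trans h0 hαβ) h1 (fun S h => hP S t h)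
    rw [rob'_insert P D' t ht α, rob'_insert P D' t ht β]
    have h0' : (0:ℝ) ≤ 1 - α := by linarith
    nlinarith [rob'_nonneg P D' β (le_trans h0 hαβ) h1,
      rob'_nonneg (fun S => P (insert t S)) D' β (le_trans h0 hαβ) h1]

/-- if `σ` is monotonic w.r.t. deletion of transactions, then the
robustness is monotone in the subsampling parameter. -/
theorem robustness_mono_in_alpha {A : Type*}
    (σ : Finset A → Dataset A → Prop)
    (hσ : ∀ (X : Finset A) (S : Dataset A) (t : ℕ × (A → Bool)),
      t ∈ S → ¬ σ X S → ¬ σ X (S.erase t))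
    (D : Dataset A) (X : Finset A) (α β : ℝ)
    (h0 : 0 ≤ α) (hαβ : α ≤ β) (h1 : β ≤ 1) :
    robustness σ X D α ≤ robustness σ X D β := by
  have hconv : ∀ γ : ℝ, robustness σ X D γ = rob' (fun S => σ X S) D γ := by
    intro γ
    unfold robustness rob'
    rw [Finset.sum_filter]
    apply Finset.sum_congr rfl
    intro S _
    split <;> simp
  rw [hconv α, hconv β]
  apply rob'_mono_alpha α β h0 hαβ h1
  intro S t hS
  by_cases ht : t ∈ S
  · rwa [Finset.insert_eq_self.mpr ht]
  · by_contra h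
    have := hσ X (insert t S) t (Finset.mem_insert_self t S) h
    rw [Finset.erase_insert ht] at this
    exact this hS
end
end

section
/- The freeness predicate is monotonic w.r.t. deletion: for every itemset X, every binary dataset D, and every transaction t ∈ D, if X is not free in D then X is not free in D \ {t}. -/
open Classical Finset

noncomputable section

/-- The support of an itemset `X` in `D`: the number of transactions
containing all items of `X`. -/
def supp {A : Type*} (X : Finset A) (D : Dataset A) : ℕ :=
  (D.filter (fun s => ∀ x ∈ X, s.2 x = true)).card

/-- `X` is free in `D` if no proper subset of `X` has the same support. -/
def IsFree {A : Type*} (X : Finset A) (D : Dataset A) : Prop :=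
  ¬ ∃ Y : Finset A, Y ⊂ X ∧ supp X D = supp Y D

/-- freeness is monotonic w.r.t. deletion. -/
theorem free_monotone_wrt_deletion {A : Type*}
    (X : Finset A) (D : Dataset A) (t : ℕ × (A → Bool)) (ht : t ∈ D)
    (h : ¬ IsFree X D) : ¬ IsFree X (D.erase t) := by
  rw [IsFree, not_not] at h ⊢
  obtain ⟨Y, hYX, hsupp⟩ := h
  refine ⟨Y, hYX, ?_⟩
  have hsub : D.filter (fun s => ∀ x ∈ X, s.2 x = true) ⊆
      D.filter (fun s => ∀ x ∈ Y, s.2 x = true) := by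
    intro s hs
    simp only [Finset.mem_filter] at hs ⊢
    exact ⟨hs.1, fun x hx => hs.2 x (hYX.1 hx)⟩
  have heq : D.filter (fun s => ∀ x ∈ X, s.2 x = true) =
      D.filter (fun s => ∀ x ∈ Y, s.2 x = true) :=
    Finset.eq_of_subset_of_card_le hsub (le_of_eq hsupp.symm)
  have key : ∀ Z : Finset A, (D.erase t).filter (fun s => ∀ x ∈ Z, s.2 x = true)
      = (D.filter (fun s => ∀ x ∈ Z, s.2 x = true)).erase t := by
    intro Z
    ext s
    simp only [Finset.mem_filter, Finset.mem_erase]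
    tauto
  simp only [supp, key, heq]
end
end

section
/- The closedness predicate is monotonic w.r.t. deletion: for every itemset X, every binary dataset D, and every transaction t ∈ D, if X is not closed in D then X is not closed in D \ {t}. -/
open Classical Finset

noncomputable section

def IsClosedItemset {A : Type*} (X : Finset A) (D : Dataset A) : Prop :=
  ¬ ∃ Y : Finset A, X ⊂ Y ∧ supp X D = supp Y D

/-- closedness is monotonic w.r.t. deletion. -/
theorem closed_monotone_wrt_deletion {A : Type*}
    (X : Finset A) (D : Dataset A) (t : ℕ × (A → Bool)) (ht : t ∈ D)
    (h : ¬ IsClosedItemset X D) : ¬ IsClosedItemset X (D.erase t) := by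
  rw [IsClosedItemset, not_not] at h ⊢
  obtain ⟨Y, hXY, hsupp⟩ := h
  refine ⟨Y, hXY, ?_⟩
  have hsub : D.filter (fun s => ∀ x ∈ Y, s.2 x = true) ⊆
      D.filter (fun s => ∀ x ∈ X, s.2 x = true) := by
    intro s hs
    simp only [Finset.mem_filter] at hs ⊢
    exact ⟨hs.1, fun x hx => hs.2 x (hXY.1 hx)⟩
  have heq : D.filter (fun s => ∀ x ∈ X, s.2 x = true) =
      D.filter (fun s => ∀ x ∈ Y, s.2 x = true) :=
    (Finset.eq_of_subset_of_card_le hsub hsupp.le).symm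
  simp only [supp, Finset.filter_erase, heq]
end
end

section
/- Let X be an itemset in a binary dataset D and let V ⊆ {0,1}^X be the set of the |X| vectors having exactly one entry equal to 0 (and all other entries equal to 1). Then for all 0 ≤ α ≤ 1, the robustness of the freeness predicate satisfies r(X; free, D, α) = ∏_{v ∈ V} (1 - (1-α)^{supp(X = v; D)}). -/
open Classical Finset

noncomputable section

/-- `suppEq X v D` is the number of transactions of `D` whose restriction to
the coordinates in `X` equals (the restriction of) `v`. -/
def suppEq {A : Type*} (X : Finset A) (v : A → Bool) (D : Dataset A) : ℕ :=
  (D.filter (fun s => ∀ x ∈ X, s.2 x = v x)).card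

/-- Total weight of all subsamples is `1`. -/
lemma sum_weight {A : Type*} (D : Dataset A) (α : ℝ) :
    ∑ S ∈ D.powerset, α ^ S.card * (1 - α) ^ (D.card - S.card) = 1 := by
  have h := Finset.prod_add (fun _ : ℕ × (A → Bool) => α) (fun _ => (1 - α)) D
  simp only [Finset.prod_const] at h
  rw [show α + (1 - α) = (1:ℝ) by ring, one_pow] at h
  calc ∑ S ∈ D.powerset, α ^ S.card * (1 - α) ^ (D.card - S.card)
      = ∑ S ∈ D.powerset, α ^ S.card * (1 - α) ^ (D \ S).card :=
        Finset.sum_congr rfl (fun S hS => by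
          rw [Finset.card_sdiff_of_subset (Finset.mem_powerset.mp hS)])
    _ = 1 := h.symm

/-- Key combinatorial identity: for pairwise disjoint subsets `T x ⊆ D`,
the total weight of subsamples meeting every `T x` is the product of
`1 - (1-α)^{|T x|}`. -/
lemma key_sum {A : Type*} [DecidableEq A] (α : ℝ) (X : Finset A) :
    ∀ (D : Dataset A) (T : A → Dataset A),
      (∀ x ∈ X, T x ⊆ D) →
      (∀ x ∈ X, ∀ y ∈ X, x ≠ y → Disjoint (T x) (T y)) →
      ∑ S ∈ D.powerset.filter (fun S => ∀ x ∈ X, (S ∩ T x).Nonempty),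
          α ^ S.card * (1 - α) ^ (D.card - S.card)
        = ∏ x ∈ X, (1 - (1 - α) ^ (T x).card) := by
  induction X using Finset.induction_on with
  | empty =>
    intro D T _ _
    simp [sum_weight]
  | @insert a X' ha ih =>
    intro D T hsub hdisj
    have haD : T a ⊆ D := hsub a (Finset.mem_insert_self a X')
    have e1 : D.powerset.filter (fun S => ∀ x ∈ insert a X', (S ∩ T x).Nonempty)
        = (D.powerset.filter (fun S => ∀ x ∈ X', (S ∩ T x).Nonempty)).filter
            (fun S => (S ∩ T a).Nonempty) := by
      rw [Finset.filter_filter]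
      apply Finset.filter_congr
      intro S _
      simp only [Finset.forall_mem_insert]
      tauto
    rw [e1]
    have hsplit := Finset.sum_filter_add_sum_filter_not
      (D.powerset.filter (fun S => ∀ x ∈ X', (S ∩ T x).Nonempty))
      (fun S => (S ∩ T a).Nonempty)
      (fun S => α ^ S.card * (1 - α) ^ (D.card - S.card))
    have e2 : (D.powerset.filter (fun S => ∀ x ∈ X', (S ∩ T x).Nonempty)).filter
          (fun S => ¬ (S ∩ T a).Nonempty)
        = (D \ T a).powerset.filter (fun S => ∀ x ∈ X', (S ∩ T x).Nonempty) := by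
      ext S
      simp only [Finset.mem_filter, Finset.mem_powerset, Finset.not_nonempty_iff_eq_empty,
        Finset.subset_sdiff, ← Finset.disjoint_iff_inter_eq_empty]
      tauto
    have hc1 : ∀ x ∈ X', T x ⊆ D := fun x hx => hsub x (Finset.mem_insert_of_mem hx)
    have hc2 : ∀ x ∈ X', ∀ y ∈ X', x ≠ y → Disjoint (T x) (T y) := fun x hx y hy =>
      hdisj x (Finset.mem_insert_of_mem hx) y (Finset.mem_insert_of_mem hy)
    have hc1' : ∀ x ∈ X', T x ⊆ D \ T a := by
      intro x hx
      rw [Finset.subset_sdiff]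
      refine ⟨hc1 x hx, hdisj x (Finset.mem_insert_of_mem hx) a
        (Finset.mem_insert_self a X') (fun h => ha (h ▸ hx))⟩
    have e3 : ∑ S ∈ (D \ T a).powerset.filter (fun S => ∀ x ∈ X', (S ∩ T x).Nonempty),
          α ^ S.card * (1 - α) ^ (D.card - S.card)
        = (1 - α) ^ (T a).card *
          ∑ S ∈ (D \ T a).powerset.filter (fun S => ∀ x ∈ X', (S ∩ T x).Nonempty),
            α ^ S.card * (1 - α) ^ ((D \ T a).card - S.card) := by
      rw [Finset.mul_sum]
      apply Finset.sum_congr rfl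
      intro S hS
      have hS' : S ⊆ D \ T a := Finset.mem_powerset.mp (Finset.mem_filter.mp hS).1
      have h1 : S.card ≤ (D \ T a).card := Finset.card_le_card hS'
      have h2 : (T a).card ≤ D.card := Finset.card_le_card haD
      have h3 : (D \ T a).card = D.card - (T a).card := Finset.card_sdiff_of_subset haD
      have h4 : D.card - S.card = (T a).card + ((D \ T a).card - S.card) := by omega
      rw [h4, pow_add]
      ring
    have key1 := ih D T hc1 hc2
    have key2 := ih (D \ T a) T hc1' hc2
    have hnot : ∑ S ∈ (D.powerset.filter (fun S => ∀ x ∈ X', (S ∩ T x).Nonempty)).filter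
          (fun S => ¬ (S ∩ T a).Nonempty),
          α ^ S.card * (1 - α) ^ (D.card - S.card)
        = (1 - α) ^ (T a).card * ∏ x ∈ X', (1 - (1 - α) ^ (T x).card) := by
      rw [e2, e3, key2]
    rw [Finset.prod_insert ha]
    linear_combination hsplit + key1 - hnot

lemma supp_le {A : Type*} {X Y : Finset A} (h : Y ⊆ X) (S : Dataset A) :
    supp X S ≤ supp Y S := by
  apply Finset.card_le_card
  apply Finset.monotone_filter_right
  intro s _ hs y hy
  exact hs y (h hy)

/-- Characterization of freeness via witness transactions. -/
lemma isFree_iff {A : Type*} [DecidableEq A] (X : Finset A) (S : Dataset A) :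
    IsFree X S ↔ ∀ x ∈ X, ∃ s ∈ S, ∀ y ∈ X, s.2 y = decide (y ≠ x) := by
  constructor
  · intro hfree x hx
    by_contra hcon
    push_neg at hcon
    apply hfree
    refine ⟨X.erase x, Finset.erase_ssubset hx, ?_⟩
    apply le_antisymm (supp_le (Finset.erase_subset x X) S)
    apply Finset.card_le_card
    intro s hs
    rw [Finset.mem_filter] at hs ⊢
    refine ⟨hs.1, ?_⟩
    intro y hy
    by_cases hyx : y = x
    · subst hyx
      by_contra hfalse
      obtain ⟨z, hz, hzz⟩ := hcon s hs.1
      by_cases hzx : z = y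
      · subst hzx
        simp only [ne_eq, not_true_eq_false, decide_false] at hzz
        exact hfalse (by simpa using hzz)
      · have h1 := hs.2 z (Finset.mem_erase.mpr ⟨hzx, hz⟩)
        simp only [ne_eq, hzx, not_false_eq_true, decide_true] at hzz
        exact hzz h1
    · exact hs.2 y (Finset.mem_erase.mpr ⟨hyx, hy⟩)
  · rintro hex ⟨Y, hYX, heq⟩
    obtain ⟨x, hxX, hxY⟩ := Finset.exists_of_ssubset hYX
    obtain ⟨s, hsS, hs⟩ := hex x hxX
    have hsub : S.filter (fun t => ∀ y ∈ X, t.2 y = true)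
        ⊆ S.filter (fun t => ∀ y ∈ Y, t.2 y = true) :=
      Finset.monotone_filter_right _ (fun t _ ht y hy => ht y (hYX.1 hy))
    have hsY : s ∈ S.filter (fun t => ∀ y ∈ Y, t.2 y = true) := by
      rw [Finset.mem_filter]
      refine ⟨hsS, fun y hy => ?_⟩
      have h1 := hs y (hYX.1 hy)
      have hyx : y ≠ x := fun h => hxY (h ▸ hy)
      simpa [hyx] using h1
    have hsX : s ∉ S.filter (fun t => ∀ y ∈ X, t.2 y = true) := by
      rw [Finset.mem_filter]
      rintro ⟨-, h⟩
      have h1 := h x hxX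
      have h2 := hs x hxX
      simp at h2
      rw [h1] at h2
      simp at h2
    have hlt : supp X S < supp Y S :=
      Finset.card_lt_card ((Finset.ssubset_iff_of_subset hsub).mpr ⟨s, hsY, hsX⟩)
    omega

/-- the robustness of freeness is the product, over the `|X|`
vectors `v` with exactly one entry `0` (namely, for each `x ∈ X`, the vector
that is `0` at `x` and `1` elsewhere), of `1 - (1-α)^{supp(X = v; D)}`. -/
theorem robustness_free_formula {A : Type*} [DecidableEq A]
    (X : Finset A) (D : Dataset A) (α : ℝ) (h0 : 0 ≤ α) (h1 : α ≤ 1) :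
    robustness IsFree X D α =
      ∏ x ∈ X, (1 - (1 - α) ^ suppEq X (fun y => decide (y ≠ x)) D) := by
  set T : A → Dataset A := fun x => D.filter (fun s => ∀ y ∈ X, s.2 y = decide (y ≠ x))
    with hT
  have hTsub : ∀ x ∈ X, T x ⊆ D := fun x _ => Finset.filter_subset _ _
  have hTdisj : ∀ x ∈ X, ∀ y ∈ X, x ≠ y → Disjoint (T x) (T y) := by
    intro x hx y hy hxy
    rw [Finset.disjoint_left]
    intro s hsx hsy
    have h1 := (Finset.mem_filter.mp hsx).2 x hx
    have h2 := (Finset.mem_filter.mp hsy).2 x hx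
    simp only [ne_eq, not_true_eq_false, decide_false] at h1
    simp only [ne_eq, hxy, not_false_eq_true, decide_true] at h2
    rw [h1] at h2
    simp at h2
  have hfilter : D.powerset.filter (fun S => IsFree X S)
      = D.powerset.filter (fun S => ∀ x ∈ X, (S ∩ T x).Nonempty) := by
    apply Finset.filter_congr
    intro S hS
    rw [Finset.mem_powerset] at hS
    rw [isFree_iff]
    constructor
    · intro h x hx
      obtain ⟨s, hsS, hs⟩ := h x hx
      exact ⟨s, Finset.mem_inter.mpr ⟨hsS, Finset.mem_filter.mpr ⟨hS hsS, hs⟩⟩⟩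
    · intro h x hx
      obtain ⟨s, hsm⟩ := h x hx
      rw [Finset.mem_inter] at hsm
      exact ⟨s, hsm.1, (Finset.mem_filter.mp hsm.2).2⟩
  have hcard : ∀ x, suppEq X (fun y => decide (y ≠ x)) D = (T x).card := by
    intro x
    rfl
  rw [robustness, hfilter, key_sum α X D T hTsub hTdisj]
  exact Finset.prod_congr rfl (fun x _ => by rw [hcard])
end
end

section
/- Let X be an itemset in a binary dataset D and let V = {0,1}^X be the set of all binary vectors of length |X|. Then for all 0 ≤ α ≤ 1, the robustness of the totally-shattered predicate satisfies r(X; totally shattered, D, α) = ∏_{v ∈ V} (1 - (1-α)^{supp(X = v; D)}). -/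
open Classical Finset

noncomputable section

/-- `X` is totally shattered in `D` if every binary vector over `X` occurs in `D`. -/
def TotallyShattered {A : Type*} (X : Finset A) (D : Dataset A) : Prop :=
  ∀ v : A → Bool, 0 < suppEq X v D

/-- Matching the restriction of the indicator vector of `T ⊆ X` on `X` is the
same as the filter of positive positions in `X` being `T`. -/
lemma restrict_eq_iff {A : Type*} [DecidableEq A] (X T : Finset A) (hT : T ⊆ X)
    (f : A → Bool) :
    (∀ x ∈ X, f x = decide (x ∈ T)) ↔ X.filter (fun x => f x) = T := by
  constructor
  · intro h
    ext x
    simp only [Finset.mem_filter]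
    constructor
    · rintro ⟨hx, hfx⟩
      have := h x hx
      rw [hfx] at this
      exact of_decide_eq_true this.symm
    · intro hx
      refine ⟨hT hx, ?_⟩
      rw [h x (hT hx)]
      simp [hx]
  · intro h x hx
    have h1 : f x = true ↔ x ∈ T := by
      rw [← h]; simp [Finset.mem_filter, hx]
    by_cases hxt : x ∈ T
    · simp [hxt, h1.mpr hxt]
    · cases hfx : f x
      · simp [hxt]
      · exact absurd (h1.mp hfx) hxt

lemma shatter_iff {A : Type*} [DecidableEq A] (X : Finset A) (S : Dataset A) :
    TotallyShattered X S ↔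
      ∀ T ∈ X.powerset, ∃ b ∈ S, X.filter (fun x => b.2 x) = T := by
  constructor
  · intro h T hT
    rw [Finset.mem_powerset] at hT
    have := h (fun y => decide (y ∈ T))
    rw [suppEq, Finset.card_pos] at this
    obtain ⟨b, hb⟩ := this
    rw [Finset.mem_filter] at hb
    exact ⟨b, hb.1, (restrict_eq_iff X T hT b.2).mp hb.2⟩
  · intro h v
    obtain ⟨b, hbS, hb⟩ := h (X.filter (fun x => v x))
      (Finset.mem_powerset.mpr (Finset.filter_subset _ _))
    rw [suppEq, Finset.card_pos]
    refine ⟨b, Finset.mem_filter.mpr ⟨hbS, ?_⟩⟩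
    intro x hx
    have h1 : b.2 x = true ↔ x ∈ X.filter (fun x => v x) := by
      rw [← hb]; simp [hx]
    have h2 : v x = true ↔ x ∈ X.filter (fun x => v x) := by
      simp [hx]
    cases hvx : v x <;> cases hbx : b.2 x <;> simp_all

/-- The key combinatorial identity, by induction on the dataset. -/
lemma main_aux {β' ι : Type*} [DecidableEq β'] [DecidableEq ι] (k : β' → ι) (α : ℝ)
    (D : Finset β') : ∀ (s : Finset ι)
    (inst : DecidablePred (fun S : Finset β' => ∀ i ∈ s, ∃ b ∈ S, k b = i)),
    ∑ S ∈ @Finset.filter _ _ inst D.powerset,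
      α ^ S.card * (1 - α) ^ (D.card - S.card)
      = ∏ i ∈ s, (1 - (1 - α) ^ (D.filter (fun b => k b = i)).card) := by
  induction D using Finset.induction_on with
  | empty =>
    intro s inst
    rw [Finset.sum_filter, Finset.powerset_empty, Finset.sum_singleton]
    rcases s.eq_empty_or_nonempty with rfl | ⟨i, hi⟩
    · rw [if_pos (by simp)]
      simp
    · rw [if_neg (by push_neg; exact ⟨i, hi, by simp⟩)]
      rw [Finset.prod_eq_zero hi]
      simp
  | @insert b D hb ih =>
    intro s inst
    rw [Finset.sum_filter, Finset.sum_powerset_insert hb]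
    have hcard : (insert b D).card = D.card + 1 := Finset.card_insert_of_notMem hb
    have hcond : ∀ S : Finset β', (∀ i ∈ s, ∃ b' ∈ insert b S, k b' = i) ↔
        (∀ i ∈ s.erase (k b), ∃ b' ∈ S, k b' = i) := by
      intro S
      constructor
      · intro h i hi
        rw [Finset.mem_erase] at hi
        obtain ⟨b', hb', hkb'⟩ := h i hi.2
        rw [Finset.mem_insert] at hb'
        rcases hb' with rfl | hb'
        · exact absurd hkb'.symm hi.1
        · exact ⟨b', hb', hkb'⟩
      · intro h i hi
        by_cases hik : i = k b
        · exact ⟨b, Finset.mem_insert_self _ _, hik.symm⟩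
        · obtain ⟨b', hb', hkb'⟩ := h i (Finset.mem_erase.mpr ⟨hik, hi⟩)
          exact ⟨b', Finset.mem_insert_of_mem hb', hkb'⟩
    calc _ = (1 - α) * ∏ i ∈ s, (1 - (1 - α) ^ (D.filter (fun b => k b = i)).card)
            + α * ∏ i ∈ s.erase (k b),
                (1 - (1 - α) ^ (D.filter (fun b => k b = i)).card) := by
          congr 1
          · rw [← ih s (fun S => Classical.propDecidable _), Finset.sum_filter,
              Finset.mul_sum]
            refine Finset.sum_congr rfl fun S hS => ?_
            rw [Finset.mem_powerset] at hS
            have hle : S.card ≤ D.card := Finset.card_le_card hS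
            have he : (insert b D).card - S.card = (D.card - S.card) + 1 := by
              rw [hcard]; omega
            by_cases hc : ∀ i ∈ s, ∃ b' ∈ S, k b' = i
            · rw [if_pos hc, if_pos hc, he, pow_succ]; ring
            · rw [if_neg hc, if_neg hc]; ring
          · rw [← ih (s.erase (k b)) (fun S => Classical.propDecidable _),
              Finset.sum_filter, Finset.mul_sum]
            refine Finset.sum_congr rfl fun S hS => ?_
            rw [Finset.mem_powerset] at hS
            have hbS : b ∉ S := fun h => hb (hS h)
            have hle : S.card ≤ D.card := Finset.card_le_card hS
            have he : (insert b D).card - (insert b S).card = D.card - S.card := by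
              rw [hcard, Finset.card_insert_of_notMem hbS]; omega
            by_cases hc : ∀ i ∈ s.erase (k b), ∃ b' ∈ S, k b' = i
            · rw [if_pos ((hcond S).mpr hc), if_pos hc, he,
                Finset.card_insert_of_notMem hbS, pow_succ]
              ring
            · rw [if_neg (fun h => hc ((hcond S).mp h)), if_neg hc]; ring
      _ = _ := by
          by_cases hkb : k b ∈ s
          · have herase : s = insert (k b) (s.erase (k b)) :=
              (Finset.insert_erase hkb).symm
            have hfilt : (insert b D).filter (fun b' => k b' = k b)
                = insert b (D.filter (fun b' => k b' = k b)) := by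
              rw [Finset.filter_insert]
              simp
            have hfilt2 : ∀ i ∈ s.erase (k b),
                (insert b D).filter (fun b' => k b' = i)
                = D.filter (fun b' => k b' = i) := by
              intro i hi
              rw [Finset.mem_erase] at hi
              rw [Finset.filter_insert]
              simp [Ne.symm hi.1]
            conv_lhs => rw [herase]
            conv_rhs => rw [herase]
            rw [Finset.prod_insert (Finset.notMem_erase _ _),
              Finset.prod_insert (Finset.notMem_erase _ _)]
            rw [Finset.erase_insert (Finset.notMem_erase _ _)]
            rw [hfilt,
              Finset.card_insert_of_notMem (fun h => hb (Finset.mem_filter.mp h).1)]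
            rw [show (∏ i ∈ s.erase (k b),
                (1 - (1 - α) ^ ((insert b D).filter (fun b' => k b' = i)).card))
                = ∏ i ∈ s.erase (k b),
                (1 - (1 - α) ^ (D.filter (fun b' => k b' = i)).card) from
              Finset.prod_congr rfl (fun i hi => by rw [hfilt2 i hi])]
            rw [pow_succ]
            ring
          · rw [Finset.erase_eq_of_notMem hkb]
            have hfilt2 : ∀ i ∈ s, (insert b D).filter (fun b' => k b' = i)
                = D.filter (fun b' => k b' = i) := by
              intro i hi
              rw [Finset.filter_insert]
              have : k b ≠ i := fun h => hkb (h ▸ hi)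
              simp [this]
            rw [show (∏ i ∈ s,
                (1 - (1 - α) ^ ((insert b D).filter (fun b' => k b' = i)).card))
                = ∏ i ∈ s, (1 - (1 - α) ^ (D.filter (fun b' => k b' = i)).card) from
              Finset.prod_congr rfl (fun i hi => by rw [hfilt2 i hi])]
            ring

/-- the robustness of total shatteredness is the product, over all
binary vectors `v` over `X` (identified with the subsets `T ⊆ X` of positions
carrying a `1`), of `1 - (1-α)^{supp(X = v; D)}`. -/
theorem robustness_totallyShattered_formula {A : Type*} [DecidableEq A]
    (X : Finset A) (D : Dataset A) (α : ℝ) (h0 : 0 ≤ α) (h1 : α ≤ 1) :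
    robustness TotallyShattered X D α =
      ∏ T ∈ X.powerset,
        (1 - (1 - α) ^ suppEq X (fun y => decide (y ∈ T)) D) := by
  rw [robustness]
  rw [Finset.filter_congr (fun S _ => shatter_iff X S)]
  rw [main_aux (fun b => X.filter (fun x => b.2 x)) α D X.powerset _]
  apply Finset.prod_congr rfl
  intro T hT
  rw [Finset.mem_powerset] at hT
  congr 2
  rw [suppEq]
  congr 1
  apply Finset.filter_congr
  intro b _
  exact (restrict_eq_iff X T hT b.2).symm
end
end

section
/- Let X be an itemset in a binary dataset D. Let V ⊆ {0,1}^X be the set of vectors with an odd number of ones and W ⊆ {0,1}^X the set of vectors with an even number of ones. Writing o(X, U, α) = ∏_{v ∈ U} (1 - (1-α)^{supp(X = v; D)}), the robustness of the non-derivability predicate satisfies, for all 0 ≤ α ≤ 1, r(X; non-derivable, D, α) = 1 - (1 - o(X, V, α))(1 - o(X, W, α)). -/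
open Classical Finset

noncomputable section

/-- `X` is non-derivable in `D` if there are no two vectors over `X`, one with an
odd and one with an even number of zero entries, both of support zero. -/
def NonDerivable {A : Type*} (X : Finset A) (D : Dataset A) : Prop :=
  ¬ ∃ v w : A → Bool,
      Odd (X.filter (fun x => v x = false)).card ∧
      Even (X.filter (fun x => w x = false)).card ∧
      suppEq X v D = 0 ∧ suppEq X w D = 0

/-- `orf X U D α = ∏_{T ∈ U} (1 - (1-α)^{supp(X = v_T; D)})`, where the binary
vector `v_T` over `X` has ones exactly on `T`. -/
def orf {A : Type*} [DecidableEq A] (X : Finset A) (U : Finset (Finset A))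
    (D : Dataset A) (α : ℝ) : ℝ :=
  ∏ T ∈ U, (1 - (1 - α) ^ suppEq X (fun y => decide (y ∈ T)) D)

namespace RobustAux

variable {A : Type*}

/-- The subsampling measure of the event `E` on subdatasets of `D`. -/
def mu (D : Dataset A) (E : Dataset A → Prop) (α : ℝ) : ℝ :=
  ∑ S ∈ D.powerset.filter E, α ^ S.card * (1 - α) ^ (D.card - S.card)

lemma sum_total (D : Dataset A) (α : ℝ) :
    ∑ S ∈ D.powerset, α ^ S.card * (1 - α) ^ (D.card - S.card) = 1 := by
  have h := Finset.prod_add (fun _ : ℕ × (A → Bool) => α) (fun _ => (1 - α)) D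
  simp only [Finset.prod_const] at h
  have h1 : α + (1 - α) = 1 := by ring
  rw [h1, one_pow] at h
  calc ∑ S ∈ D.powerset, α ^ S.card * (1 - α) ^ (D.card - S.card)
      = ∑ S ∈ D.powerset, α ^ S.card * (1 - α) ^ (D \ S).card := by
        apply Finset.sum_congr rfl
        intro S hS
        rw [Finset.card_sdiff_of_subset (Finset.mem_powerset.mp hS)]
    _ = 1 := h.symm

lemma mu_add_not (D : Dataset A) (E : Dataset A → Prop) (α : ℝ) :
    mu D E α + mu D (fun S => ¬ E S) α = 1 := by
  unfold mu
  rw [Finset.sum_filter_add_sum_filter_not]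
  exact sum_total D α

lemma mu_not (D : Dataset A) (E : Dataset A → Prop) (α : ℝ) :
    mu D (fun S => ¬ E S) α = 1 - mu D E α := by
  have h := mu_add_not D E α
  linarith

lemma mu_eq_one_sub_not (D : Dataset A) (E : Dataset A → Prop) (α : ℝ) :
    mu D E α = 1 - mu D (fun S => ¬ E S) α := by
  have h := mu_add_not D E α
  linarith

lemma mu_congr {D : Dataset A} {E F : Dataset A → Prop} (h : ∀ S ⊆ D, (E S ↔ F S)) (α : ℝ) :
    mu D E α = mu D F α := by
  unfold mu
  congr 1
  apply Finset.filter_congr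
  intro S hS
  simpa using h S (Finset.mem_powerset.mp hS)

lemma mu_eq_empty (C : Dataset A) (α : ℝ) :
    mu C (fun U => U = ∅) α = (1 - α) ^ C.card := by
  unfold mu
  rw [Finset.sum_filter, Finset.sum_eq_single (∅ : Dataset A)]
  · simp
  · intro S hS hne
    simp [hne]
  · intro h
    exact absurd (Finset.empty_mem_powerset C) h

lemma mu_ne_empty (C : Dataset A) (α : ℝ) :
    mu C (fun U => ¬ (U = ∅)) α = 1 - (1 - α) ^ C.card := by
  rw [mu_not, mu_eq_empty]

lemma mu_union (Q R : Dataset A) (hd : Disjoint Q R) (E F : Dataset A → Prop) (α : ℝ) :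
    mu (Q ∪ R) (fun S => E (S ∩ Q) ∧ F (S ∩ R)) α = mu Q E α * mu R F α := by
  unfold mu
  rw [Finset.sum_filter, Finset.sum_filter, Finset.sum_filter, Finset.sum_mul_sum,
    ← Finset.sum_product']
  refine Finset.sum_bij' (fun S _ => (S ∩ Q, S ∩ R)) (fun p _ => p.1 ∪ p.2) ?_ ?_ ?_ ?_ ?_
  · intro S hS
    simp only [Finset.mem_product, Finset.mem_powerset]
    exact ⟨Finset.inter_subset_right, Finset.inter_subset_right⟩
  · intro p hp
    simp only [Finset.mem_product, Finset.mem_powerset] at hp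
    exact Finset.mem_powerset.mpr (Finset.union_subset_union hp.1 hp.2)
  · intro S hS
    show (S ∩ Q) ∪ (S ∩ R) = S
    rw [← Finset.inter_union_distrib_left]
    exact Finset.inter_eq_left.mpr (Finset.mem_powerset.mp hS)
  · intro p hp
    simp only [Finset.mem_product, Finset.mem_powerset] at hp
    have h1 : p.1 ∩ Q = p.1 := Finset.inter_eq_left.mpr hp.1
    have h2 : p.2 ∩ R = p.2 := Finset.inter_eq_left.mpr hp.2
    have h3 : p.2 ∩ Q = ∅ := Finset.disjoint_iff_inter_eq_empty.mp
      (Finset.disjoint_of_subset_left hp.2 hd.symm)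
    have h4 : p.1 ∩ R = ∅ := Finset.disjoint_iff_inter_eq_empty.mp
      (Finset.disjoint_of_subset_left hp.1 hd)
    show ((p.1 ∪ p.2) ∩ Q, (p.1 ∪ p.2) ∩ R) = p
    rw [Finset.union_inter_distrib_right, Finset.union_inter_distrib_right,
      h1, h2, h3, h4, Finset.union_empty, Finset.empty_union]
  · intro S hS
    have hSQR := Finset.mem_powerset.mp hS
    have hdisjS : Disjoint (S ∩ Q) (S ∩ R) :=
      Finset.disjoint_of_subset_left Finset.inter_subset_right
        (Finset.disjoint_of_subset_right Finset.inter_subset_right hd)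
    have hScard : S.card = (S ∩ Q).card + (S ∩ R).card := by
      rw [← Finset.card_union_of_disjoint hdisjS, ← Finset.inter_union_distrib_left,
        Finset.inter_eq_left.mpr hSQR]
    have hQR : (Q ∪ R).card = Q.card + R.card := Finset.card_union_of_disjoint hd
    by_cases h1 : E (S ∩ Q) <;> by_cases h2 : F (S ∩ R) <;> simp [h1, h2]
    have e1 : (S ∩ Q).card ≤ Q.card := Finset.card_le_card Finset.inter_subset_right
    have e2 : (S ∩ R).card ≤ R.card := Finset.card_le_card Finset.inter_subset_right
    have h5 : (Q ∪ R).card - S.card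
        = (Q.card - (S ∩ Q).card) + (R.card - (S ∩ R).card) := by
      omega
    rw [h5, hScard, pow_add, pow_add]
    ring

lemma mu_indep {κ : Type*} [DecidableEq κ] (ι : Finset κ) (P : κ → Dataset A)
    (E : κ → Dataset A → Prop) (α : ℝ)
    (hdisj : (↑ι : Set κ).PairwiseDisjoint P) :
    mu (ι.biUnion P) (fun S => ∀ i ∈ ι, E i (S ∩ P i)) α = ∏ i ∈ ι, mu (P i) (E i) α := by
  induction ι using Finset.induction_on with
  | empty => simp [mu]
  | @insert j s hj ih =>
    have hsub : (↑s : Set κ).PairwiseDisjoint P :=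
      hdisj.subset (Finset.coe_subset.mpr (Finset.subset_insert j s))
    have hQR : Disjoint (P j) (s.biUnion P) := by
      rw [Finset.disjoint_biUnion_right]
      intro i hi
      exact hdisj (by simp) (by simp [hi]) (by rintro rfl; exact hj hi)
    rw [Finset.biUnion_insert, Finset.prod_insert hj, ← ih hsub,
      ← mu_union (P j) (s.biUnion P) hQR (E j) (fun U => ∀ i ∈ s, E i (U ∩ P i)) α]
    apply mu_congr
    intro S hS
    rw [Finset.forall_mem_insert]
    have hB : ∀ i ∈ s, (S ∩ s.biUnion P) ∩ P i = S ∩ P i := by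
      intro i hi
      rw [Finset.inter_assoc, Finset.inter_eq_right.mpr (Finset.subset_biUnion_of_mem P hi)]
    constructor
    · rintro ⟨h1, h2⟩
      exact ⟨h1, fun i hi => (hB i hi).symm ▸ h2 i hi⟩
    · rintro ⟨h1, h2⟩
      exact ⟨h1, fun i hi => (hB i hi) ▸ h2 i hi⟩

/-- the class of transactions of `D` matching the pattern `T` on `X`. -/
def cls [DecidableEq A] (X T : Finset A) (D : Dataset A) : Dataset A :=
  D.filter (fun s => ∀ x ∈ X, s.2 x = decide (x ∈ T))

lemma suppEq_cls [DecidableEq A] (X T : Finset A) (D : Dataset A) :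
    suppEq X (fun y => decide (y ∈ T)) D = (cls X T D).card := rfl

lemma cls_inter [DecidableEq A] (X T : Finset A) {S D : Dataset A} (hS : S ⊆ D) :
    S ∩ cls X T D = cls X T S := by
  unfold cls
  ext s
  simp only [Finset.mem_inter, Finset.mem_filter]
  exact ⟨fun h => ⟨h.1, h.2.2⟩, fun h => ⟨h.1, hS h.1, h.2⟩⟩

lemma biUnion_cls [DecidableEq A] (X : Finset A) (D : Dataset A) :
    X.powerset.biUnion (fun T => cls X T D) = D := by
  ext s
  simp only [Finset.mem_biUnion, cls, Finset.mem_filter, Finset.mem_powerset]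
  constructor
  · rintro ⟨T, _, hs, _⟩
    exact hs
  · intro hs
    refine ⟨X.filter (fun x => s.2 x = true), Finset.filter_subset _ _, hs, ?_⟩
    intro x hx
    cases hvx : s.2 x <;> simp [hx, hvx]

lemma cls_disjoint [DecidableEq A] (X : Finset A) (D : Dataset A) {T T' : Finset A}
    (hT : T ⊆ X) (hT' : T' ⊆ X) (hne : T ≠ T') :
    Disjoint (cls X T D) (cls X T' D) := by
  rw [Finset.disjoint_left]
  intro s hs hs'
  apply hne
  simp only [cls, Finset.mem_filter] at hs hs'
  ext x
  by_cases hx : x ∈ X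
  · have h := (hs.2 x hx).symm.trans (hs'.2 x hx)
    simpa using h
  · constructor
    · intro h; exact absurd (hT h) hx
    · intro h; exact absurd (hT' h) hx

lemma cls_pairwiseDisjoint [DecidableEq A] (X : Finset A) (D : Dataset A)
    {U : Finset (Finset A)} (hU : U ⊆ X.powerset) :
    (↑U : Set (Finset A)).PairwiseDisjoint (fun T => cls X T D) := by
  intro T hT T' hT' hne
  exact cls_disjoint X D
    (Finset.mem_powerset.mp (hU (Finset.mem_coe.mp hT)))
    (Finset.mem_powerset.mp (hU (Finset.mem_coe.mp hT'))) hne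

lemma suppEq_congr (X : Finset A) {v w : A → Bool} (h : ∀ x ∈ X, v x = w x) (S : Dataset A) :
    suppEq X v S = suppEq X w S := by
  unfold suppEq
  congr 1
  apply Finset.filter_congr
  intro s _
  constructor <;> intro hs x hx
  · rw [← h x hx]; exact hs x hx
  · rw [h x hx]; exact hs x hx

lemma zeros_card (X : Finset A) (v : A → Bool) :
    (X.filter (fun x => v x = false)).card
      = X.card - (X.filter (fun x => v x = true)).card := by
  have h : X.filter (fun x => v x = false) = X \ X.filter (fun x => v x = true) := by
    ext x
    simp only [Finset.mem_filter, Finset.mem_sdiff, not_and]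
    constructor
    · intro ⟨h1, h2⟩
      exact ⟨h1, fun _ => by simp [h2]⟩
    · intro ⟨h1, h2⟩
      refine ⟨h1, ?_⟩
      cases hvx : v x
      · rfl
      · exact absurd hvx (h2 h1)
  rw [h, Finset.card_sdiff_of_subset (Finset.filter_subset _ _)]

lemma filter_chi [DecidableEq A] {X T : Finset A} (hT : T ⊆ X) :
    X.filter (fun x => decide (x ∈ T) = true) = T := by
  ext x
  simp only [Finset.mem_filter, decide_eq_true_eq]
  exact ⟨fun h => h.2, fun h => ⟨hT h, h⟩⟩

lemma exists_vec_iff [DecidableEq A] (X : Finset A) (p : ℕ → Prop) (S : Dataset A) :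
    (∃ v : A → Bool, p (X.filter (fun x => v x = false)).card ∧ suppEq X v S = 0)
      ↔ ∃ T : Finset A, (T ⊆ X ∧ p (X.card - T.card)) ∧
          suppEq X (fun y => decide (y ∈ T)) S = 0 := by
  constructor
  · rintro ⟨v, hp, hsupp⟩
    refine ⟨X.filter (fun x => v x = true),
      ⟨Finset.filter_subset _ _, by rwa [← zeros_card]⟩, ?_⟩
    rw [← hsupp]
    apply suppEq_congr
    intro x hx
    cases hvx : v x <;> simp [hx, hvx]
  · rintro ⟨T, hT, hsupp⟩
    refine ⟨fun y => decide (y ∈ T), ?_, hsupp⟩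
    rw [zeros_card, filter_chi hT.1]
    exact hT.2

/-- The key computation: for a parity-style split of the patterns. -/
lemma mu_exists_empty [DecidableEq A] (X : Finset A) (D : Dataset A) (α : ℝ)
    {U : Finset (Finset A)} (hU : U ⊆ X.powerset) :
    mu (U.biUnion (fun T => cls X T D))
      (fun S => ∃ T ∈ U, S ∩ cls X T D = ∅) α = 1 - orf X U D α := by
  rw [mu_eq_one_sub_not]
  have h1 : mu (U.biUnion (fun T => cls X T D))
      (fun S => ¬ ∃ T ∈ U, S ∩ cls X T D = ∅) α
      = mu (U.biUnion (fun T => cls X T D))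
        (fun S => ∀ T ∈ U, ¬ (S ∩ cls X T D = ∅)) α := by
    apply mu_congr
    intro S _
    push_neg
    simp
  rw [h1, mu_indep U (fun T => cls X T D) (fun T V => ¬ (V = ∅)) α
    (cls_pairwiseDisjoint X D hU)]
  unfold orf
  congr 1
  apply Finset.prod_congr rfl
  intro T _
  rw [mu_ne_empty, suppEq_cls]

end RobustAux

open RobustAux in
/-- the robustness of non-derivability equals
`1 - (1 - o(X, V, α)) * (1 - o(X, W, α))`, where `V` consists of the vectors
over `X` with an odd number of ones and `W` of those with an even number of ones. -/
theorem robustness_nonDerivable_formula {A : Type*} [DecidableEq A]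
    (X : Finset A) (D : Dataset A) (α : ℝ) (h0 : 0 ≤ α) (h1 : α ≤ 1) :
    robustness NonDerivable X D α =
      1 - (1 - orf X (X.powerset.filter (fun T => Odd T.card)) D α)
        * (1 - orf X (X.powerset.filter (fun T => Even T.card)) D α) := by
  classical
  set O : Finset (Finset A) := X.powerset.filter (fun T => Odd (X.card - T.card)) with hO
  set E : Finset (Finset A) := X.powerset.filter (fun T => Even (X.card - T.card)) with hE
  have hOsub : O ⊆ X.powerset := Finset.filter_subset _ _
  have hEsub : E ⊆ X.powerset := Finset.filter_subset _ _
  set PO : Dataset A := O.biUnion (fun T => cls X T D) with hPO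
  set PE : Dataset A := E.biUnion (fun T => cls X T D) with hPE
  -- D is the disjoint union of PO and PE
  have hcup : PO ∪ PE = D := by
    rw [← biUnion_cls X D]
    ext s
    simp only [hPO, hPE, hO, hE, Finset.mem_union, Finset.mem_biUnion, Finset.mem_filter]
    constructor
    · rintro (⟨T, ⟨hT, _⟩, hs⟩ | ⟨T, ⟨hT, _⟩, hs⟩) <;> exact ⟨T, hT, hs⟩
    · rintro ⟨T, hT, hs⟩
      rcases Nat.even_or_odd (X.card - T.card) with h | h
      · exact Or.inr ⟨T, ⟨hT, h⟩, hs⟩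
      · exact Or.inl ⟨T, ⟨hT, h⟩, hs⟩
  have hdisjOE : Disjoint PO PE := by
    rw [hPO, Finset.disjoint_biUnion_left]
    intro T hT
    rw [hPE, Finset.disjoint_biUnion_right]
    intro T' hT'
    rw [hO, Finset.mem_filter, Finset.mem_powerset] at hT
    rw [hE, Finset.mem_filter, Finset.mem_powerset] at hT'
    apply cls_disjoint X D hT.1 hT'.1
    rintro rfl
    exact (Nat.not_odd_iff_even.mpr hT'.2) hT.2
  -- robustness as a measure
  have hrob : robustness NonDerivable X D α = mu D (fun S => NonDerivable X S) α := rfl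
  -- rewrite non-derivability
  have hND : ∀ S : Dataset A, NonDerivable X S ↔
      ¬ ((∃ T ∈ O, suppEq X (fun y => decide (y ∈ T)) S = 0) ∧
         (∃ T ∈ E, suppEq X (fun y => decide (y ∈ T)) S = 0)) := by
    intro S
    unfold NonDerivable
    apply not_congr
    rw [hO, hE]
    simp only [Finset.mem_filter, Finset.mem_powerset]
    rw [← exists_vec_iff X (fun n => Odd n) S, ← exists_vec_iff X (fun n => Even n) S]
    constructor
    · rintro ⟨v, w, hv1, hw1, hv2, hw2⟩
      exact ⟨⟨v, hv1, hv2⟩, ⟨w, hw1, hw2⟩⟩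
    · rintro ⟨⟨v, hv1, hv2⟩, ⟨w, hw1, hw2⟩⟩
      exact ⟨v, w, hv1, hw1, hv2, hw2⟩
  -- the two one-sided events
  have hmain : mu D (fun S => NonDerivable X S) α
      = 1 - mu D (fun S =>
          ((∃ T ∈ O, suppEq X (fun y => decide (y ∈ T)) S = 0) ∧
           (∃ T ∈ E, suppEq X (fun y => decide (y ∈ T)) S = 0))) α := by
    rw [mu_congr (fun S _ => hND S) α, mu_not]
  -- factorize
  have hfact := mu_union PO PE hdisjOE
      (fun U => ∃ T ∈ O, U ∩ cls X T D = ∅)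
      (fun U => ∃ T ∈ E, U ∩ cls X T D = ∅) α
  rw [hcup] at hfact
  have hev : mu D (fun S =>
          ((∃ T ∈ O, suppEq X (fun y => decide (y ∈ T)) S = 0) ∧
           (∃ T ∈ E, suppEq X (fun y => decide (y ∈ T)) S = 0))) α
      = mu D (fun S =>
          ((∃ T ∈ O, (S ∩ PO) ∩ cls X T D = ∅) ∧
           (∃ T ∈ E, (S ∩ PE) ∩ cls X T D = ∅))) α := by
    apply mu_congr
    intro S hS
    have key : ∀ (U : Finset (Finset A)) (PU : Dataset A),
        PU = U.biUnion (fun T => cls X T D) →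
        ((∃ T ∈ U, suppEq X (fun y => decide (y ∈ T)) S = 0)
          ↔ (∃ T ∈ U, (S ∩ PU) ∩ cls X T D = ∅)) := by
      rintro U PU rfl
      apply exists_congr
      intro T
      apply and_congr_right
      intro hT
      rw [suppEq_cls, ← cls_inter X T hS, Finset.card_eq_zero,
        Finset.inter_assoc, Finset.inter_eq_right.mpr
          (Finset.subset_biUnion_of_mem (fun T => cls X T D) hT)]
    rw [key O PO hPO, key E PE hPE]
  have hO' : mu PO (fun U => ∃ T ∈ O, U ∩ cls X T D = ∅) α = 1 - orf X O D α := by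
    rw [hPO]; exact mu_exists_empty X D α hOsub
  have hE' : mu PE (fun U => ∃ T ∈ E, U ∩ cls X T D = ∅) α = 1 - orf X E D α := by
    rw [hPE]; exact mu_exists_empty X D α hEsub
  rw [hrob, hmain, hev, hfact, hO', hE']
  -- now identify the parity classes
  rcases Nat.even_or_odd X.card with hX | hX
  · have e1 : O = X.powerset.filter (fun T => Odd T.card) := by
      rw [hO]
      apply Finset.filter_congr
      intro T hT
      have hle := Finset.card_le_card (Finset.mem_powerset.mp hT)
      rw [Nat.even_iff] at hX
      rw [Nat.odd_iff, Nat.odd_iff]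
      omega
    have e2 : E = X.powerset.filter (fun T => Even T.card) := by
      rw [hE]
      apply Finset.filter_congr
      intro T hT
      have hle := Finset.card_le_card (Finset.mem_powerset.mp hT)
      rw [Nat.even_iff] at hX
      rw [Nat.even_iff, Nat.even_iff]
      omega
    rw [e1, e2]
  · have e1 : O = X.powerset.filter (fun T => Even T.card) := by
      rw [hO]
      apply Finset.filter_congr
      intro T hT
      have hle := Finset.card_le_card (Finset.mem_powerset.mp hT)
      rw [Nat.odd_iff] at hX
      rw [Nat.odd_iff, Nat.even_iff]
      omega
    have e2 : E = X.powerset.filter (fun T => Odd T.card) := by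
      rw [hE]
      apply Finset.filter_congr
      intro T hT
      have hle := Finset.card_le_card (Finset.mem_powerset.mp hT)
      rw [Nat.odd_iff] at hX
      rw [Nat.even_iff, Nat.odd_iff]
      omega
    rw [e1, e2]
    ring
end
end

section
/- Let X be an itemset in a binary dataset D over item set A. Then for all 0 ≤ α ≤ 1, the robustness of the closedness predicate satisfies r(X; closed, D, α) = Σ_{Y with X ⊆ Y ⊆ A} (-1)^{|Y| - |X|} (1-α)^{supp(X; D) - supp(Y; D)}. -/
open Classical Finset

noncomputable section

/-! ### Auxiliary definitions and lemmas -/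

/-- The transactions of `S` containing all items of `X`. -/
def tr {A : Type*} (X : Finset A) (S : Dataset A) : Dataset A :=
  S.filter (fun s => ∀ x ∈ X, s.2 x = true)

lemma supp_eq_card_tr {A : Type*} (X : Finset A) (S : Dataset A) :
    supp X S = (tr X S).card := rfl

lemma tr_anti {A : Type*} {X Y : Finset A} (h : X ⊆ Y) (S : Dataset A) :
    tr Y S ⊆ tr X S := by
  intro s hs
  simp only [tr, mem_filter] at hs ⊢
  exact ⟨hs.1, fun x hx => hs.2 x (h hx)⟩

lemma supp_eq_iff_tr_eq {A : Type*} {X Y : Finset A} (h : X ⊆ Y) (S : Dataset A) :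
    supp X S = supp Y S ↔ tr X S = tr Y S := by
  constructor
  · intro hc
    exact (Finset.eq_of_subset_of_card_le (tr_anti h S)
      (le_of_eq hc)).symm
  · intro he
    rw [supp_eq_card_tr, supp_eq_card_tr, he]

/-- The set of "blocking" items outside `X`. -/
def blk {A : Type*} [Fintype A] (X : Finset A) (S : Dataset A) : Finset A :=
  Finset.univ.filter (fun a => a ∉ X ∧ ∀ s ∈ tr X S, s.2 a = true)

lemma supp_eq_iff_sdiff_subset_blk {A : Type*} [Fintype A] {X Y : Finset A}
    (h : X ⊆ Y) (S : Dataset A) :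
    supp X S = supp Y S ↔ Y \ X ⊆ blk X S := by
  rw [supp_eq_iff_tr_eq h]
  constructor
  · intro he a ha
    rw [mem_sdiff] at ha
    simp only [blk, mem_filter, mem_univ, true_and]
    refine ⟨ha.2, fun s hs => ?_⟩
    rw [he] at hs
    simp only [tr, mem_filter] at hs
    exact hs.2 a ha.1
  · intro hb
    refine le_antisymm ?_ (tr_anti h S)
    intro s hs
    simp only [tr, mem_filter] at hs ⊢
    refine ⟨hs.1, fun y hy => ?_⟩
    by_cases hyX : y ∈ X
    · exact hs.2 y hyX
    · have : y ∈ blk X S := hb (mem_sdiff.mpr ⟨hy, hyX⟩)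
      simp only [blk, mem_filter] at this
      exact this.2.2 s (by simp only [tr, mem_filter]; exact ⟨hs.1, hs.2⟩)

lemma closed_iff_blk_empty {A : Type*} [Fintype A] (X : Finset A) (S : Dataset A) :
    IsClosedItemset X S ↔ blk X S = ∅ := by
  constructor
  · intro hc
    by_contra hne
    obtain ⟨a, ha⟩ := Finset.nonempty_iff_ne_empty.mpr hne
    simp only [blk, mem_filter, mem_univ, true_and] at ha
    refine hc ⟨insert a X, Finset.ssubset_insert ha.1, ?_⟩
    rw [supp_eq_iff_sdiff_subset_blk (Finset.subset_insert a X)]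
    intro b hb
    rw [mem_sdiff, Finset.mem_insert] at hb
    rcases hb.1 with rfl | hbX
    · simp only [blk, mem_filter, mem_univ, true_and]; exact ha
    · exact absurd hbX hb.2
  · rintro hb ⟨Y, hXY, hsupp⟩
    obtain ⟨a, haY, haX⟩ := Finset.exists_of_ssubset hXY
    have : a ∈ blk X S :=
      (supp_eq_iff_sdiff_subset_blk hXY.subset S).mp hsupp (mem_sdiff.mpr ⟨haY, haX⟩)
    simp [hb] at this

lemma sum_powerset_neg_one_pow_card_real {α : Type*} [DecidableEq α] (x : Finset α) :
    (∑ m ∈ x.powerset, (-1 : ℝ) ^ m.card) = if x = ∅ then 1 else 0 := by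
  have := Finset.sum_powerset_neg_one_pow_card (x := x)
  have h2 : ((∑ m ∈ x.powerset, (-1 : ℤ) ^ m.card : ℤ) : ℝ)
      = ∑ m ∈ x.powerset, (-1 : ℝ) ^ m.card := by push_cast; rfl
  rw [← h2, this]
  split <;> simp

/-- Inclusion–exclusion for the closedness indicator. -/
lemma closed_indicator {A : Type*} [Fintype A] (X : Finset A) (S : Dataset A) :
    (if IsClosedItemset X S then (1 : ℝ) else 0) =
      ∑ Y ∈ Finset.univ.filter (fun Y : Finset A => X ⊆ Y),
        (-1 : ℝ) ^ (Y.card - X.card) *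
          (if supp X S = supp Y S then 1 else 0) := by
  have key : ∑ Y ∈ Finset.univ.filter (fun Y : Finset A => X ⊆ Y),
        (-1 : ℝ) ^ (Y.card - X.card) * (if supp X S = supp Y S then 1 else 0)
      = ∑ Y ∈ Finset.univ.filter
          (fun Y : Finset A => X ⊆ Y ∧ supp X S = supp Y S),
        (-1 : ℝ) ^ (Y.card - X.card) := by
    rw [Finset.sum_filter, Finset.sum_filter]
    refine Finset.sum_congr rfl fun Y _ => ?_
    by_cases h1 : X ⊆ Y <;> by_cases h2 : supp X S = supp Y S <;> simp [h1, h2]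
  rw [key]
  have hbij : ∑ Y ∈ Finset.univ.filter
        (fun Y : Finset A => X ⊆ Y ∧ supp X S = supp Y S),
        (-1 : ℝ) ^ (Y.card - X.card)
      = ∑ T ∈ (blk X S).powerset, (-1 : ℝ) ^ T.card := by
    refine Finset.sum_nbij' (fun Y => Y \ X) (fun T => X ∪ T) ?_ ?_ ?_ ?_ ?_
    · intro Y hY
      simp only [mem_filter, mem_univ, true_and] at hY
      rw [Finset.mem_powerset]
      exact (supp_eq_iff_sdiff_subset_blk hY.1 S).mp hY.2
    · intro T hT
      rw [Finset.mem_powerset] at hT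
      simp only [mem_filter, mem_univ, true_and]
      have hTX : ∀ a ∈ T, a ∉ X := by
        intro a haT
        have := hT haT
        simp only [blk, mem_filter] at this
        exact this.2.1
      constructor
      · exact Finset.subset_union_left
      · rw [supp_eq_iff_sdiff_subset_blk Finset.subset_union_left]
        intro a ha
        rw [mem_sdiff, Finset.mem_union] at ha
        rcases ha.1 with h | h
        · exact absurd h ha.2
        · exact hT h
    · intro Y hY
      simp only [mem_filter, mem_univ, true_and] at hY
      exact Finset.union_sdiff_of_subset hY.1
    · intro T hT
      rw [Finset.mem_powerset] at hT
      apply Finset.union_sdiff_cancel_left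
      rw [Finset.disjoint_right]
      intro a haT
      have := hT haT
      simp only [blk, mem_filter] at this
      exact this.2.1
    · intro Y hY
      simp only [mem_filter, mem_univ, true_and] at hY
      rw [Finset.card_sdiff_of_subset hY.1]
  rw [hbij, sum_powerset_neg_one_pow_card_real, closed_iff_blk_empty]
  by_cases h : blk X S = ∅ <;> simp [h]

/-- The weighted count of subsamples disjoint from a fixed `E ⊆ D`. -/
lemma sum_weight_disjoint {A : Type*} [Fintype A] (D E : Dataset A) (hE : E ⊆ D) (α : ℝ) :
    ∑ S ∈ D.powerset.filter (fun S => Disjoint S E),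
        α ^ S.card * (1 - α) ^ (D.card - S.card) = (1 - α) ^ E.card := by
  have hset : D.powerset.filter (fun S => Disjoint S E) = (D \ E).powerset := by
    ext S
    simp [Finset.mem_powerset, Finset.subset_sdiff]
  rw [hset]
  have hcard : (D \ E).card = D.card - E.card := Finset.card_sdiff_of_subset hE
  have hD : D.card = (D \ E).card + E.card := by
    have := Finset.card_le_card hE
    rw [hcard]; omega
  have : ∑ S ∈ (D \ E).powerset, α ^ S.card * (1 - α) ^ ((D \ E).card - S.card)
      = 1 := by
    have h := Finset.prod_add (fun _ : ℕ × (A → Bool) => α)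
      (fun _ : ℕ × (A → Bool) => (1 - α)) (D \ E)
    simp only [Finset.prod_const] at h
    have hl : (α + (1 - α)) = 1 := by ring
    rw [hl, one_pow] at h
    calc ∑ S ∈ (D \ E).powerset, α ^ S.card * (1 - α) ^ ((D \ E).card - S.card)
        = ∑ S ∈ (D \ E).powerset, α ^ S.card * (1 - α) ^ ((D \ E) \ S).card := by
          refine Finset.sum_congr rfl fun S hS => ?_
          rw [Finset.mem_powerset] at hS
          rw [Finset.card_sdiff_of_subset hS]
      _ = 1 := h.symm
  calc ∑ S ∈ (D \ E).powerset, α ^ S.card * (1 - α) ^ (D.card - S.card)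
      = ∑ S ∈ (D \ E).powerset,
          (α ^ S.card * (1 - α) ^ ((D \ E).card - S.card)) * (1 - α) ^ E.card := by
        apply Finset.sum_congr rfl
        intro S hS
        rw [Finset.mem_powerset] at hS
        have hSle : S.card ≤ (D \ E).card := Finset.card_le_card hS
        have h1 : (D \ E).card = D.card - E.card := Finset.card_sdiff_of_subset hE
        have h2 := Finset.card_le_card hE
        have h3 : D.card - S.card = ((D \ E).card - S.card) + E.card := by omega
        rw [mul_assoc, ← pow_add, h3]
    _ = (1 - α) ^ E.card := by
        rw [← Finset.sum_mul, this, one_mul]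

lemma tr_subset_base {A : Type*} [Fintype A] (X : Finset A) (S : Dataset A) : tr X S ⊆ S := by
  intro s hs
  simp only [tr, mem_filter] at hs
  exact hs.1

lemma supp_cond_iff_disjoint {A : Type*} [Fintype A] {X Y : Finset A} (hXY : X ⊆ Y)
    {S D : Dataset A} (hS : S ⊆ D) :
    supp X S = supp Y S ↔ Disjoint S (tr X D \ tr Y D) := by
  rw [supp_eq_iff_tr_eq hXY]
  constructor
  · intro he
    rw [Finset.disjoint_right]
    intro s hs
    rw [mem_sdiff] at hs
    simp only [tr, mem_filter] at hs
    intro hsS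
    apply hs.2
    refine ⟨hS hsS, ?_⟩
    have : s ∈ tr Y S := by
      rw [← he]; simp only [tr, mem_filter]; exact ⟨hsS, hs.1.2⟩
    simp only [tr, mem_filter] at this
    exact this.2
  · intro hd
    refine le_antisymm ?_ (tr_anti hXY S)
    intro s hs
    simp only [tr, mem_filter] at hs ⊢
    refine ⟨hs.1, ?_⟩
    by_contra hny
    have hmem : s ∈ tr X D \ tr Y D := by
      rw [mem_sdiff]
      constructor
      · simp only [tr, mem_filter]; exact ⟨hS hs.1, hs.2⟩
      · simp only [tr, mem_filter]
        intro h; exact hny h.2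
    exact (Finset.disjoint_right.mp hd hmem) hs.1

set_option maxHeartbeats 1000000 in
/-- the robustness of closedness equals the alternating sum
`Σ_{X ⊆ Y ⊆ A} (-1)^{|Y| - |X|} (1-α)^{supp(X) - supp(Y)}`. -/
theorem robustness_closed_formula {A : Type*} [Fintype A]
    (X : Finset A) (D : Dataset A) (α : ℝ) (h0 : 0 ≤ α) (h1 : α ≤ 1) :
    robustness IsClosedItemset X D α =
      ∑ Y ∈ Finset.univ.filter (fun Y : Finset A => X ⊆ Y),
        (-1 : ℝ) ^ (Y.card - X.card) * (1 - α) ^ (supp X D - supp Y D) := by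
  rw [robustness, Finset.sum_filter]
  have step1 : ∑ S ∈ D.powerset,
        (if IsClosedItemset X S then α ^ S.card * (1 - α) ^ (D.card - S.card) else 0)
      = ∑ S ∈ D.powerset, (if IsClosedItemset X S then (1:ℝ) else 0) *
          (α ^ S.card * (1 - α) ^ (D.card - S.card)) := by
    apply Finset.sum_congr rfl
    intro S _
    split <;> simp
  rw [step1]
  have step2 : ∀ S ∈ D.powerset,
      (if IsClosedItemset X S then (1:ℝ) else 0) *
          (α ^ S.card * (1 - α) ^ (D.card - S.card))
      = ∑ Y ∈ Finset.univ.filter (fun Y : Finset A => X ⊆ Y),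
          (-1 : ℝ) ^ (Y.card - X.card) *
            ((if supp X S = supp Y S then (1:ℝ) else 0) *
              (α ^ S.card * (1 - α) ^ (D.card - S.card))) := by
    intro S _
    rw [closed_indicator X S, Finset.sum_mul]
    apply Finset.sum_congr rfl
    intro Y _
    ring
  rw [Finset.sum_congr rfl step2, Finset.sum_comm]
  apply Finset.sum_congr rfl
  intro Y hY
  simp only [mem_filter, mem_univ, true_and] at hY
  rw [← Finset.mul_sum]
  congr 1
  have hcond : ∀ S ∈ D.powerset,
      (if supp X S = supp Y S then (1:ℝ) else 0) *
          (α ^ S.card * (1 - α) ^ (D.card - S.card))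
      = (if Disjoint S (tr X D \ tr Y D) then (1:ℝ) else 0) *
          (α ^ S.card * (1 - α) ^ (D.card - S.card)) := by
    intro S hS
    rw [Finset.mem_powerset] at hS
    exact congrArg (fun z => z * (α ^ S.card * (1 - α) ^ (D.card - S.card)))
      (if_congr (supp_cond_iff_disjoint hY hS) rfl rfl)
  rw [Finset.sum_congr rfl hcond]
  have : ∑ S ∈ D.powerset,
      (if Disjoint S (tr X D \ tr Y D) then (1:ℝ) else 0) *
          (α ^ S.card * (1 - α) ^ (D.card - S.card))
      = ∑ S ∈ D.powerset.filter (fun S => Disjoint S (tr X D \ tr Y D)),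
          α ^ S.card * (1 - α) ^ (D.card - S.card) := by
    rw [Finset.sum_filter]
    apply Finset.sum_congr rfl
    intro S _
    split <;> simp
  rw [this]
  have hEcard : (tr X D \ tr Y D).card = supp X D - supp Y D := by
    rw [Finset.card_sdiff_of_subset (tr_anti hY D), supp_eq_card_tr, supp_eq_card_tr]
  rw [← hEcard]
  exact sum_weight_disjoint D (tr X D \ tr Y D)
    (Finset.sdiff_subset.trans (tr_subset_base X D)) α
end
end

section
/- Let G = (V, E) be a finite graph with E = {e_1, …, e_K}, and let D be the binary dataset over item set E containing, for each vertex v ∈ V, one transaction (tid_v, t_v) where t_v ∈ {0,1}^K is defined by t_{v,i} = 1 if and only if edge e_i is not incident with v. Then for every subset S ⊆ D, the empty itemset ∅ is closed in S if and only if V_S = {v ∈ V : (tid_v, t_v) ∈ S} is a vertex cover of G. -/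
open Classical Finset

noncomputable section

lemma supp_empty' {A : Type*} (D : Dataset A) : supp ∅ D = D.card := by
  simp [supp]

lemma supp_eq_card_iff' {A : Type*} (X : Finset A) (D : Dataset A) :
    supp X D = D.card ↔ ∀ s ∈ D, ∀ x ∈ X, s.2 x = true := by
  unfold supp
  constructor
  · intro h s hs
    have hsub : D ⊆ D.filter (fun s => ∀ x ∈ X, s.2 x = true) := by
      rw [Finset.eq_of_subset_of_card_le (Finset.filter_subset _ D) (le_of_eq h.symm)]
    exact (Finset.mem_filter.mp (hsub hs)).2
  · intro h
    exact le_antisymm (Finset.card_filter_le _ _)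
      (Finset.card_le_card (fun s hs => Finset.mem_filter.mpr ⟨hs, h s hs⟩))

/-- for the dataset built from a graph `G` (items are the edges of
`G`; for each vertex `v` there is one transaction whose vector has a `1` at edge
`e` iff `e` is not incident with `v`), the empty itemset is closed in a subset
`S ⊆ D` iff the set of vertices whose transactions belong to `S` is a vertex
cover of `G`. -/
theorem closed_empty_iff_vertexCover {V : Type*} [Fintype V]
    (G : SimpleGraph V)
    (tid : V → ℕ) (htid : Function.Injective tid)
    (tvec : V → (↥G.edgeSet → Bool))
    (htvec : ∀ (v : V) (e : ↥G.edgeSet), tvec v e = true ↔ v ∉ (e : Sym2 V))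
    (D : Dataset ↥G.edgeSet)
    (hD : D = Finset.univ.image (fun v => (tid v, tvec v)))
    (S : Dataset ↥G.edgeSet) (hS : S ⊆ D) :
    IsClosedItemset (∅ : Finset ↥G.edgeSet) S ↔
      ∀ e : ↥G.edgeSet, ∃ v : V, (tid v, tvec v) ∈ S ∧ v ∈ (e : Sym2 V) := by
  constructor
  · intro hclosed e
    by_contra hno
    push_neg at hno
    apply hclosed
    refine ⟨{e}, Finset.empty_ssubset.mpr (Finset.singleton_nonempty e), ?_⟩
    rw [supp_empty']
    symm
    rw [supp_eq_card_iff']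
    intro s hsS x hx
    rw [Finset.mem_singleton] at hx
    have hsD := hS hsS
    rw [hD] at hsD
    obtain ⟨v, -, hv⟩ := Finset.mem_image.mp hsD
    rw [← hv]
    exact (htvec v x).mpr (fun hmem => hno v (by rw [hv]; exact hsS) (hx ▸ hmem))
  · intro hcov
    rintro ⟨Y, hY, hsupp⟩
    obtain ⟨e, he⟩ := Finset.empty_ssubset.mp hY
    rw [supp_empty'] at hsupp
    have hall := (supp_eq_card_iff' Y S).mp hsupp.symm
    obtain ⟨v, hvS, hve⟩ := hcov e
    have htrue := hall _ hvS e he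
    exact ((htvec v e).mp htrue) hve
end
end

section
/- Let σ be an itemset predicate, X and Y itemsets, and D a binary dataset. For 0 ≤ k ≤ |D| define c_k(X) as the number of subsets S ⊆ D with |S| = |D| - k and σ(X; S) = 0, and analogously c_k(Y). If c_k(X) = c_k(Y) for all k, then r(X; σ, D, α) = r(Y; σ, D, α) for every 0 ≤ α ≤ 1. If the vector (c_0(X), …, c_{|D|}(X)) is strictly larger than (c_0(Y), …, c_{|D|}(Y)) in lexicographical order, then there exists β < 1 such that r(X; σ, D, α) < r(Y; σ, D, α) for all α with β ≤ α < 1. -/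
open Classical Finset

noncomputable section

lemma fail_sum {A : Type*} (σ : Finset A → Dataset A → Prop) (X : Finset A)
    (D : Dataset A) (c : ℕ → ℕ)
    (hc : ∀ k ≤ D.card, c k =
      (D.powerset.filter (fun S => S.card = D.card - k ∧ ¬ σ X S)).card)
    (α : ℝ) :
    robustness σ X D α =
      (∑ S ∈ D.powerset, α ^ S.card * (1 - α) ^ (D.card - S.card))
      - ∑ k ∈ Finset.range (D.card + 1),
          (c k : ℝ) * (α ^ (D.card - k) * (1 - α) ^ k) := by
  have hsplit := Finset.sum_filter_add_sum_filter_not D.powerset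
    (fun S => σ X S) (fun S => α ^ S.card * (1 - α) ^ (D.card - S.card))
  have h1 : ∑ S ∈ D.powerset.filter (fun S => ¬ σ X S),
      α ^ S.card * (1 - α) ^ (D.card - S.card)
      = ∑ k ∈ Finset.range (D.card + 1),
          (c k : ℝ) * (α ^ (D.card - k) * (1 - α) ^ k) := by
    rw [← Finset.sum_fiberwise_of_maps_to (g := fun S => D.card - S.card)
      (t := Finset.range (D.card + 1)) ?_]
    · apply Finset.sum_congr rfl
      intro k hk
      have hk' : k ≤ D.card := by
        simp only [Finset.mem_range] at hk; omega
      have hset : (D.powerset.filter (fun S => ¬ σ X S)).filter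
          (fun S => D.card - S.card = k)
          = D.powerset.filter (fun S => S.card = D.card - k ∧ ¬ σ X S) := by
        rw [Finset.filter_filter]
        apply Finset.filter_congr
        intro S hS
        have hle : S.card ≤ D.card :=
          Finset.card_le_card (Finset.mem_powerset.mp hS)
        constructor
        · rintro ⟨h2, h3⟩; exact ⟨by omega, h2⟩
        · rintro ⟨h3, h2⟩; exact ⟨h2, by omega⟩
      have hconst : ∀ S ∈ (D.powerset.filter (fun S => ¬ σ X S)).filter
          (fun S => D.card - S.card = k),
          α ^ S.card * (1 - α) ^ (D.card - S.card)
            = α ^ (D.card - k) * (1 - α) ^ k := by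
        intro S hS
        simp only [Finset.mem_filter, Finset.mem_powerset] at hS
        have hle : S.card ≤ D.card := Finset.card_le_card hS.1.1
        have h2 : S.card = D.card - k := by omega
        have h3 : D.card - (D.card - k) = k := by omega
        rw [h2, h3]
      rw [Finset.sum_congr rfl hconst, Finset.sum_const, hset, ← hc k hk',
        nsmul_eq_mul]
    · intro S hS
      simp only [Finset.mem_filter, Finset.mem_powerset] at hS
      have := Finset.card_le_card hS.1
      simp only [Finset.mem_range]; omega
  rw [robustness, ← h1]
  linarith [hsplit]


/-- let `c_k(X)` be the number of subsets `S ⊆ D` with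
`|S| = |D| - k` failing `σ(X; S)`, and similarly `c_k(Y)`. If the two vectors
agree then the robustness functions agree; if `(c_k(X))_k` is strictly larger
in lexicographical order than `(c_k(Y))_k`, then `r(X) < r(Y)` on some
interval `[β, 1)` with `β < 1`. -/
theorem robustness_ranking_by_failure_counts {A : Type*}
    (σ : Finset A → Dataset A → Prop)
    (X Y : Finset A) (D : Dataset A) (cX cY : ℕ → ℕ)
    (hcX : ∀ k ≤ D.card, cX k =
      (D.powerset.filter (fun S => S.card = D.card - k ∧ ¬ σ X S)).card)
    (hcY : ∀ k ≤ D.card, cY k =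
      (D.powerset.filter (fun S => S.card = D.card - k ∧ ¬ σ Y S)).card) :
    ((∀ k ≤ D.card, cX k = cY k) →
      ∀ α : ℝ, 0 ≤ α → α ≤ 1 →
        robustness σ X D α = robustness σ Y D α) ∧
    ((∃ l ≤ D.card, cY l < cX l ∧ ∀ k < l, cX k = cY k) →
      ∃ β : ℝ, β < 1 ∧ ∀ α : ℝ, β ≤ α → α < 1 →
        robustness σ X D α < robustness σ Y D α) := by
  set n := D.card with hn
  have hdiff : ∀ α : ℝ, robustness σ Y D α - robustness σ X D α
      = ∑ k ∈ Finset.range (n + 1),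
          ((cX k : ℝ) - cY k) * (α ^ (n - k) * (1 - α) ^ k) := by
    intro α
    rw [fail_sum σ X D cX hcX α, fail_sum σ Y D cY hcY α]
    have hkey : ∑ k ∈ Finset.range (n + 1),
        ((cX k : ℝ) - cY k) * (α ^ (n - k) * (1 - α) ^ k)
        = ∑ k ∈ Finset.range (n + 1), (cX k : ℝ) * (α ^ (n - k) * (1 - α) ^ k)
          - ∑ k ∈ Finset.range (n + 1), (cY k : ℝ) * (α ^ (n - k) * (1 - α) ^ k) := by
      rw [← Finset.sum_sub_distrib]
      apply Finset.sum_congr rfl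
      intro k _
      ring
    rw [hkey, ← hn]
    ring
  constructor
  · intro heq α _ _
    have h0 : robustness σ Y D α - robustness σ X D α = 0 := by
      rw [hdiff α]
      apply Finset.sum_eq_zero
      intro k hk
      have : k ≤ n := by simp only [Finset.mem_range] at hk; omega
      rw [heq k this]
      ring
    linarith
  · rintro ⟨l, hl, hlt, hagree⟩
    set g : ℝ → ℝ := fun α => ∑ k ∈ Finset.Icc l n,
      ((cX k : ℝ) - cY k) * (α ^ (n - k) * (1 - α) ^ (k - l)) with hg
    have hfac : ∀ α : ℝ, robustness σ Y D α - robustness σ X D α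
        = (1 - α) ^ l * g α := by
      intro α
      rw [hdiff α, hg]
      have hsub : Finset.Icc l n ⊆ Finset.range (n + 1) := by
        intro k hk
        simp only [Finset.mem_Icc] at hk
        simp only [Finset.mem_range]; omega
      rw [← Finset.sum_subset hsub ?_]
      · rw [Finset.mul_sum]
        apply Finset.sum_congr rfl
        intro k hk
        simp only [Finset.mem_Icc] at hk
        have : (1 - α) ^ l * (1 - α) ^ (k - l) = (1 - α) ^ k := by
          rw [← pow_add]; congr 1; omega
        calc ((cX k : ℝ) - cY k) * (α ^ (n - k) * (1 - α) ^ k)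
            = ((cX k : ℝ) - cY k) * (α ^ (n - k) * ((1 - α) ^ l * (1 - α) ^ (k - l))) := by
              rw [this]
          _ = (1 - α) ^ l * (((cX k : ℝ) - cY k) * (α ^ (n - k) * (1 - α) ^ (k - l))) := by
              ring
      · intro k hk hk2
        simp only [Finset.mem_range] at hk
        simp only [Finset.mem_Icc] at hk2
        have hkl : k < l := by omega
        rw [hagree k hkl]
        ring
    have hg1 : g 1 = (cX l : ℝ) - cY l := by
      rw [hg]
      simp only
      rw [Finset.sum_eq_single l]
      · simp
      · intro k hk hne
        simp only [Finset.mem_Icc] at hk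
        have : k - l ≠ 0 := by omega
        simp [this, sub_self, zero_pow]
      · intro h
        exact absurd (Finset.mem_Icc.mpr ⟨le_refl l, hl⟩) h
    have hg1pos : 0 < g 1 := by
      rw [hg1]
      have : (cY l : ℝ) < cX l := by exact_mod_cast hlt
      linarith
    have hcont : Continuous g := by
      apply continuous_finset_sum
      intro k _
      exact (continuous_const.mul ((continuous_pow _).mul
        ((continuous_const.sub continuous_id).pow _)))
    have hev : ∀ᶠ α in nhds (1 : ℝ), 0 < g α :=
      (hcont.tendsto 1).eventually (eventually_gt_nhds hg1pos)
    rw [Metric.eventually_nhds_iff] at hev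
    obtain ⟨ε, hε, hball⟩ := hev
    refine ⟨max (1 - ε / 2) 0, ?_, ?_⟩
    · apply max_lt <;> [linarith; norm_num]
    · intro α hβα hα1
      have hαε : dist α 1 < ε := by
        rw [Real.dist_eq, abs_sub_lt_iff]
        have h1 : 1 - ε / 2 ≤ α := le_trans (le_max_left _ _) hβα
        constructor <;> linarith
      have hgpos : 0 < g α := hball hαε
      have hpow : 0 < (1 - α) ^ l := pow_pos (by linarith) l
      have := hfac α
      nlinarith [mul_pos hpow hgpos]
end
end

section
/- Each of the four itemset predicates — closedness, freeness, non-derivability, and total shatteredness — is a monotone CNF predicate: for each itemset X over an item set A with |A| = K, there exists a finite collection {B_1, …, B_L} of sets of binary vectors of length K (depending only on X and K) such that, for every dataset D, the predicate holds for X in D if and only if for every i = 1, …, L there is a transaction (tid, t) ∈ D with t ∈ B_i. -/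
open Classical Finset

noncomputable section

/-- An itemset predicate `σ` is a monotone CNF predicate if for each itemset `X`
there is a finite collection `B_1, …, B_L` of sets of binary vectors such that,
for every dataset `D`, `σ(X; D)` holds iff `D` contains a transaction whose
vector lies in `B_i`, for every `i`. -/
def IsMonotoneCNF {A : Type*} (σ : Finset A → Dataset A → Prop) : Prop :=
  ∀ X : Finset A, ∃ (L : ℕ) (B : Fin L → Set (A → Bool)),
    ∀ D : Dataset A, σ X D ↔ ∀ i : Fin L, ∃ s ∈ D, s.2 ∈ B i

section Aux

variable {A : Type*}

lemma cnf_of {σ : Finset A → Dataset A → Prop} (X : Finset A)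
    (ι : Type*) [Fintype ι] (B : ι → Set (A → Bool))
    (h : ∀ D : Dataset A, σ X D ↔ ∀ i : ι, ∃ s ∈ D, s.2 ∈ B i) :
    ∃ (L : ℕ) (B' : Fin L → Set (A → Bool)),
      ∀ D : Dataset A, σ X D ↔ ∀ i : Fin L, ∃ s ∈ D, s.2 ∈ B' i := by
  refine ⟨Fintype.card ι, fun i => B ((Fintype.equivFin ι).symm i), fun D => (h D).trans ?_⟩
  constructor
  · intro hh i; exact hh _
  · intro hh i; simpa using hh (Fintype.equivFin ι i)

lemma supp_le_aux {X Y : Finset A} {D : Dataset A}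
    (h : ∀ s ∈ D, (∀ x ∈ Y, s.2 x = true) → (∀ x ∈ X, s.2 x = true)) :
    supp Y D ≤ supp X D := by
  unfold supp
  apply Finset.card_le_card
  intro s hs
  rw [Finset.mem_filter] at hs ⊢
  exact ⟨hs.1, h s hs.1 hs.2⟩

lemma supp_congr_aux {X Y : Finset A} {D : Dataset A}
    (h : ∀ s ∈ D, (∀ x ∈ X, s.2 x = true) ↔ (∀ x ∈ Y, s.2 x = true)) :
    supp X D = supp Y D :=
  le_antisymm (supp_le_aux fun s hs hx => (h s hs).1 hx)
    (supp_le_aux fun s hs hx => (h s hs).2 hx)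

lemma supp_lt_aux {X Y : Finset A} (hXY : X ⊆ Y) {D : Dataset A} {s : ℕ × (A → Bool)}
    (hs : s ∈ D) (hsX : ∀ x ∈ X, s.2 x = true) (hsY : ¬ ∀ x ∈ Y, s.2 x = true) :
    supp Y D < supp X D := by
  unfold supp
  apply Finset.card_lt_card
  constructor
  · intro t ht
    rw [Finset.mem_filter] at ht ⊢
    exact ⟨ht.1, fun x hx => ht.2 x (hXY hx)⟩
  · intro hsub
    exact hsY ((Finset.mem_filter.1 (hsub (Finset.mem_filter.2 ⟨hs, hsX⟩))).2)

lemma suppEq_pos_iff {X : Finset A} {v : A → Bool} {D : Dataset A} :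
    0 < suppEq X v D ↔ ∃ s ∈ D, ∀ x ∈ X, s.2 x = v x := by
  unfold suppEq
  rw [Finset.card_pos, Finset.filter_nonempty_iff]

lemma suppEq_zero_iff {X : Finset A} {v : A → Bool} {D : Dataset A} :
    suppEq X v D = 0 ↔ ∀ s ∈ D, ¬ ∀ x ∈ X, s.2 x = v x := by
  unfold suppEq
  rw [Finset.card_eq_zero, Finset.filter_eq_empty_iff]

end Aux

theorem predicates_are_monotone_CNF' {A : Type*} [Fintype A] :
    IsMonotoneCNF (A := A) IsClosedItemset ∧
    IsMonotoneCNF (A := A) IsFree ∧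
    IsMonotoneCNF (A := A) NonDerivable ∧
    IsMonotoneCNF (A := A) TotallyShattered := by
  refine ⟨?_, ?_, ?_, ?_⟩
  · -- closed
    intro X
    refine cnf_of X {a : A // a ∉ X}
      (fun a => {t | (∀ x ∈ X, t x = true) ∧ t a.1 = false}) (fun D => ?_)
    constructor
    · intro hcl ⟨a, ha⟩
      by_contra hc
      push_neg at hc
      simp only [Set.mem_setOf_eq, not_and] at hc
      refine hcl ⟨insert a X, Finset.ssubset_insert ha, supp_congr_aux fun s hs => ?_⟩
      constructor
      · intro hX x hx
        rcases Finset.mem_insert.1 hx with rfl | hx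
        · have := hc s hs hX
          cases hsa : s.2 x
          · exact absurd hsa this
          · rfl
        · exact hX x hx
      · intro hI x hx; exact hI x (Finset.mem_insert_of_mem hx)
    · rintro hcnf ⟨Y, hXY, heq⟩
      obtain ⟨a, haY, haX⟩ := Finset.exists_of_ssubset hXY
      obtain ⟨s, hs, hsX, hsa⟩ := hcnf ⟨a, haX⟩
      have hlt : supp Y D < supp X D :=
        supp_lt_aux hXY.subset hs hsX (fun h => by
          rw [h a haY] at hsa; exact Bool.true_eq_false.mp hsa)
      omega
  · -- free
    intro X
    refine cnf_of X {a : A // a ∈ X}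
      (fun a => {t | (∀ x ∈ X.erase a.1, t x = true) ∧ t a.1 = false}) (fun D => ?_)
    constructor
    · intro hfr ⟨a, ha⟩
      by_contra hc
      push_neg at hc
      simp only [Set.mem_setOf_eq, not_and] at hc
      refine hfr ⟨X.erase a, Finset.erase_ssubset ha, supp_congr_aux fun s hs => ?_⟩
      constructor
      · intro hX x hx; exact hX x (Finset.erase_subset _ _ hx)
      · intro hE x hx
        by_cases hxa : x = a
        · subst hxa
          have := hc s hs hE
          cases hsa : s.2 x
          · exact absurd hsa this
          · rfl
        · exact hE x (Finset.mem_erase.2 ⟨hxa, hx⟩)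
    · rintro hcnf ⟨Y, hYX, heq⟩
      obtain ⟨a, haX, haY⟩ := Finset.exists_of_ssubset hYX
      obtain ⟨s, hs, hsE, hsa⟩ := hcnf ⟨a, haX⟩
      have hsY : ∀ x ∈ Y, s.2 x = true := fun x hx =>
        hsE x (Finset.mem_erase.2 ⟨ne_of_mem_of_not_mem hx haY, hYX.subset hx⟩)
      have hlt : supp X D < supp Y D :=
        supp_lt_aux hYX.subset hs hsY (fun h => by
          rw [h a haX] at hsa; exact Bool.true_eq_false.mp hsa)
      omega
  · -- non-derivable
    intro X
    refine cnf_of X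
      {p : (A → Bool) × (A → Bool) //
        Odd (X.filter (fun x => p.1 x = false)).card ∧
        Even (X.filter (fun x => p.2 x = false)).card}
      (fun p => {t | (∀ x ∈ X, t x = p.1.1 x) ∨ (∀ x ∈ X, t x = p.1.2 x)}) (fun D => ?_)
    constructor
    · intro hnd ⟨⟨v, w⟩, hodd, heven⟩
      by_contra hc
      push_neg at hc
      simp only [Set.mem_setOf_eq, not_or] at hc
      refine hnd ⟨v, w, hodd, heven, ?_, ?_⟩
      · exact suppEq_zero_iff.2 fun s hs => (hc s hs).1
      · exact suppEq_zero_iff.2 fun s hs => (hc s hs).2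
    · rintro hcnf ⟨v, w, hodd, heven, hv, hw⟩
      obtain ⟨s, hs, hmem⟩ := hcnf ⟨⟨v, w⟩, hodd, heven⟩
      rcases hmem with hmv | hmw
      · exact suppEq_zero_iff.1 hv s hs hmv
      · exact suppEq_zero_iff.1 hw s hs hmw
  · -- totally shattered
    intro X
    refine cnf_of X (A → Bool) (fun v => {t | ∀ x ∈ X, t x = v x}) (fun D => ?_)
    unfold TotallyShattered
    exact ⟨fun h v => suppEq_pos_iff.1 (h v), fun h v => suppEq_pos_iff.2 (h v)⟩


/-- closedness, freeness, non-derivability, and total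
shatteredness are all monotone CNF predicates. -/
theorem predicates_are_monotone_CNF {A : Type*} [Fintype A] :
    IsMonotoneCNF (A := A) IsClosedItemset ∧
    IsMonotoneCNF (A := A) IsFree ∧
    IsMonotoneCNF (A := A) NonDerivable ∧
    IsMonotoneCNF (A := A) TotallyShattered := by
  exact predicates_are_monotone_CNF'
end
end

section
/- Let σ be a monotone CNF itemset predicate and X an itemset over an item set of size K. Then there exist a natural number N, real coefficients c_1, …, c_N, and sets S_1, …, S_N of binary vectors of length K, such that for every binary dataset D and every 0 ≤ α ≤ 1: r(X; σ, D, α) = Σ_{i=1}^{N} c_i (1-α)^{|D ∩ S_i|}, where D ∩ S denotes the set of transactions (tid, t) ∈ D with t ∈ S. -/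
open Classical Finset

noncomputable section

/-- Binomial-type identity: the subsampling weights sum to 1 (as a polynomial
identity, valid for every `α`). -/
lemma sum_subsample_weights {T : Type*} [DecidableEq T] (E : Finset T) (α : ℝ) :
    ∑ S ∈ E.powerset, α ^ S.card * (1 - α) ^ (E.card - S.card) = 1 := by
  induction E using Finset.induction_on with
  | empty => simp
  | @insert a E ha ih =>
    rw [Finset.sum_powerset_insert ha, Finset.card_insert_of_notMem ha,
      ← Finset.sum_add_distrib]
    have hcongr : ∀ t ∈ E.powerset,
        α ^ t.card * (1 - α) ^ (E.card + 1 - t.card)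
          + α ^ (insert a t).card * (1 - α) ^ (E.card + 1 - (insert a t).card)
        = α ^ t.card * (1 - α) ^ (E.card - t.card) := by
      intro t ht
      rw [Finset.mem_powerset] at ht
      have hk : t.card ≤ E.card := Finset.card_le_card ht
      have hat : a ∉ t := fun h => ha (ht h)
      rw [Finset.card_insert_of_notMem hat]
      have h1 : E.card + 1 - t.card = (E.card - t.card) + 1 := by omega
      have h2 : E.card + 1 - (t.card + 1) = E.card - t.card := by omega
      rw [h1, h2]
      ring
    rw [Finset.sum_congr rfl hcongr, ih]

/-- for a monotone CNF predicate `σ` and an itemset `X`, the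
robustness can be written, uniformly in `D` and `α`, as a finite linear
combination `Σ_i c_i (1-α)^{|D ∩ S_i|}` where `D ∩ S` is the set of
transactions of `D` whose vector lies in `S`. -/
theorem robustness_monotone_CNF_form {A : Type*} [Fintype A]
    (σ : Finset A → Dataset A → Prop) (hσ : IsMonotoneCNF σ) (X : Finset A) :
    ∃ (N : ℕ) (c : Fin N → ℝ) (S : Fin N → Set (A → Bool)),
      ∀ (D : Dataset A) (α : ℝ), 0 ≤ α → α ≤ 1 →
        robustness σ X D α =
          ∑ i : Fin N, c i * (1 - α) ^ (D.filter (fun s => s.2 ∈ S i)).card := by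
  obtain ⟨L, B, hB⟩ := hσ X
  have hcard : Fintype.card (Finset (Fin L)) = 2 ^ L := by
    simp [Fintype.card_finset]
  set e : Finset (Fin L) ≃ Fin (2 ^ L) := Fintype.equivFinOfCardEq hcard with he
  set U : Finset (Fin L) → Set (A → Bool) := fun J => {t | ∃ j ∈ J, t ∈ B j} with hU
  refine ⟨2 ^ L, fun i => (-1 : ℝ) ^ (e.symm i).card,
    fun i => U (e.symm i), fun D α _ _ => ?_⟩
  set f : Finset (Fin L) → ℝ := fun J => (-1 : ℝ) ^ J.card
      * (1 - α) ^ (D.filter (fun s => s.2 ∈ U J)).card with hf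
  suffices main : robustness σ X D α = ∑ J : Finset (Fin L), f J by
    rw [main]
    simp only [hf]
    apply Fintype.sum_equiv e
    intro J
    simp only [Equiv.symm_apply_apply]
  -- key: inclusion-exclusion term for a fixed set of clauses J
  have key : ∀ J : Finset (Fin L),
      ∑ S ∈ D.powerset, (if ∀ i ∈ J, ∀ s ∈ S, s.2 ∉ B i then (1:ℝ) else 0)
        * (α ^ S.card * (1 - α) ^ (D.card - S.card))
      = (1 - α) ^ (D.filter (fun s => s.2 ∈ U J)).card := by
    intro J
    set F := D.filter (fun s => s.2 ∈ U J) with hF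
    have hFD : F ⊆ D := Finset.filter_subset _ _
    have hps : D.powerset.filter (fun S => ∀ i ∈ J, ∀ s ∈ S, s.2 ∉ B i)
        = (D \ F).powerset := by
      ext S
      simp only [Finset.mem_filter, Finset.mem_powerset, Finset.subset_iff,
        Finset.mem_sdiff, hF, hU, Set.mem_setOf_eq]
      constructor
      · rintro ⟨h1, h2⟩ s hs
        refine ⟨h1 hs, ?_⟩
        rintro ⟨-, j, hjJ, hb⟩
        exact h2 j hjJ s hs hb
      · intro h
        refine ⟨fun {s} hs => (h hs).1, fun i hiJ s hs hb => ?_⟩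
        exact (h hs).2 ⟨(h hs).1, i, hiJ, hb⟩
    have hDF : (D \ F).card + F.card = D.card :=
      Finset.card_sdiff_add_card_eq_card hFD
    simp only [ite_mul, one_mul, zero_mul]
    rw [← Finset.sum_filter, hps]
    calc ∑ S ∈ (D \ F).powerset, α ^ S.card * (1 - α) ^ (D.card - S.card)
        = ∑ S ∈ (D \ F).powerset,
            (α ^ S.card * (1 - α) ^ ((D \ F).card - S.card)) * (1 - α) ^ F.card := by
          apply Finset.sum_congr rfl
          intro S hS
          rw [Finset.mem_powerset] at hS
          have hk : S.card ≤ (D \ F).card := Finset.card_le_card hS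
          have : D.card - S.card = ((D \ F).card - S.card) + F.card := by omega
          rw [this, pow_add, mul_assoc]
      _ = (1 - α) ^ F.card := by
          rw [← Finset.sum_mul, sum_subsample_weights, one_mul]
  -- indicator of σ as inclusion-exclusion sum
  have hind : ∀ S : Dataset A, (if σ X S then (1:ℝ) else 0)
      = ∑ J : Finset (Fin L), (-1 : ℝ) ^ J.card
          * (if ∀ i ∈ J, ∀ s ∈ S, s.2 ∉ B i then (1:ℝ) else 0) := by
    intro S
    have h1 : (if σ X S then (1:ℝ) else 0)
        = ∏ i : Fin L, (if ∃ s ∈ S, s.2 ∈ B i then (1:ℝ) else 0) := by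
      by_cases h : σ X S
      · rw [if_pos h]
        rw [hB] at h
        exact (Finset.prod_eq_one fun i _ => if_pos (h i)).symm
      · rw [if_neg h]
        rw [hB] at h
        push_neg at h
        obtain ⟨i, hi⟩ := h
        have hni : ¬ ∃ s ∈ S, s.2 ∈ B i := by push_neg; exact hi
        exact (Finset.prod_eq_zero (Finset.mem_univ i)
          (if_neg hni : (if ∃ s ∈ S, s.2 ∈ B i then (1:ℝ) else 0) = 0)).symm
    have h2 : ∀ i : Fin L, (if ∃ s ∈ S, s.2 ∈ B i then (1:ℝ) else 0)
        = (-(if ∀ s ∈ S, s.2 ∉ B i then (1:ℝ) else 0)) + 1 := by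
      intro i
      by_cases h : ∃ s ∈ S, s.2 ∈ B i
      · obtain ⟨s, hs, hb⟩ := h
        have hne : ¬ ∀ s ∈ S, s.2 ∉ B i := fun hall => hall s hs hb
        rw [if_pos ⟨s, hs, hb⟩, if_neg hne]
        norm_num
      · push_neg at h
        rw [if_neg (by push_neg; exact h), if_pos h]
        norm_num
    rw [h1, Finset.prod_congr rfl (fun i _ => h2 i), Finset.prod_add,
      Finset.powerset_univ]
    apply Finset.sum_congr rfl
    intro J _
    rw [Finset.prod_const_one, mul_one]
    have hprodneg : ∏ i ∈ J, (-(if ∀ s ∈ S, s.2 ∉ B i then (1:ℝ) else 0))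
        = (-1 : ℝ) ^ J.card * ∏ i ∈ J, (if ∀ s ∈ S, s.2 ∉ B i then (1:ℝ) else 0) := by
      rw [← Finset.prod_const, ← Finset.prod_mul_distrib]
      exact Finset.prod_congr rfl fun i _ => (neg_one_mul _).symm
    rw [hprodneg]
    congr 1
    by_cases h : ∀ i ∈ J, ∀ s ∈ S, s.2 ∉ B i
    · rw [if_pos h]
      exact Finset.prod_eq_one fun i hi => if_pos (h i hi)
    · rw [if_neg h]
      push_neg at h
      obtain ⟨i, hi, s, hs, hb⟩ := h
      exact Finset.prod_eq_zero hi
        (if_neg (fun hall => hall s hs hb) :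
          (if ∀ s ∈ S, s.2 ∉ B i then (1:ℝ) else 0) = 0)
  -- main computation
  rw [robustness, Finset.sum_filter]
  have hterm : ∀ S ∈ D.powerset,
      (if σ X S then α ^ S.card * (1 - α) ^ (D.card - S.card) else 0)
      = ∑ J : Finset (Fin L), (-1 : ℝ) ^ J.card
          * ((if ∀ i ∈ J, ∀ s ∈ S, s.2 ∉ B i then (1:ℝ) else 0)
            * (α ^ S.card * (1 - α) ^ (D.card - S.card))) := by
    intro S _
    calc (if σ X S then α ^ S.card * (1 - α) ^ (D.card - S.card) else 0)
        = (if σ X S then (1:ℝ) else 0) * (α ^ S.card * (1 - α) ^ (D.card - S.card)) := by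
          rw [ite_mul, one_mul, zero_mul]
      _ = _ := by rw [hind S, Finset.sum_mul]; simp only [mul_assoc]
  rw [Finset.sum_congr rfl hterm, Finset.sum_comm]
  apply Finset.sum_congr rfl
  intro J _
  rw [← Finset.mul_sum, key J]
end
end

section
/- Let s = s_1, …, s_K and t = t_1, …, t_N be non-decreasing sequences of non-negative integers, and define f(α) = ∏_{i=1}^{K} (1 - (1-α)^{s_i}) and g(α) = ∏_{i=1}^{N} (1 - (1-α)^{t_i}). If t ⪯ s in the sequence order, then there exists β < 1 such that for all α with β ≤ α ≤ 1, f(α) ≥ g(α). -/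
/-- `SeqPrec K s N t` : the sequence `s_0, …, s_{K-1}` strictly precedes
`t_0, …, t_{N-1}`: either there is an index `n` with `s n < t n` and
`s i = t i` for all `i < n`, or `t` is a proper prefix of `s`. -/
def SeqPrec (K : ℕ) (s : ℕ → ℕ) (N : ℕ) (t : ℕ → ℕ) : Prop :=
  (∃ n, n < K ∧ n < N ∧ s n < t n ∧ ∀ i < n, s i = t i) ∨
  (N < K ∧ ∀ i < N, s i = t i)

/-- `SeqPrecEq K s N t` : `s ⪯ t`, i.e. `s = t` (as sequences) or `s ≺ t`. -/
def SeqPrecEq (K : ℕ) (s : ℕ → ℕ) (N : ℕ) (t : ℕ → ℕ) : Prop :=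
  (K = N ∧ ∀ i < N, s i = t i) ∨ SeqPrec K s N t

lemma factor_nonneg {ε : ℝ} (hε0 : 0 ≤ ε) (hε1 : ε ≤ 1) (k : ℕ) :
    0 ≤ 1 - ε ^ k := by
  have := pow_le_one₀ hε0 hε1 (n := k)
  linarith

lemma factor_le_one {ε : ℝ} (hε0 : 0 ≤ ε) (k : ℕ) : 1 - ε ^ k ≤ 1 := by
  have := pow_nonneg hε0 k
  linarith

/-- for non-decreasing sequences `s` (of length `K`) and `t`
(of length `N`) of non-negative integers with `t ⪯ s`, the product
`f(α) = ∏_i (1 - (1-α)^{s_i})` eventually dominates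
`g(α) = ∏_i (1 - (1-α)^{t_i})` on an interval `[β, 1]` with `β < 1`. -/
theorem prod_order_near_one (K N : ℕ) (s t : ℕ → ℕ)
    (hs : ∀ i j, i ≤ j → j < K → s i ≤ s j)
    (ht : ∀ i j, i ≤ j → j < N → t i ≤ t j)
    (hts : SeqPrecEq N t K s) :
    ∃ β : ℝ, β < 1 ∧ ∀ α : ℝ, β ≤ α → α ≤ 1 →
      ∏ i ∈ Finset.range N, (1 - (1 - α) ^ t i) ≤
        ∏ i ∈ Finset.range K, (1 - (1 - α) ^ s i) := by
  by_cases hz : ∃ i, i < N ∧ t i = 0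
  · -- some factor of the left product is `0`
    obtain ⟨i, hiN, hti⟩ := hz
    refine ⟨0, by norm_num, fun α h0 h1 => ?_⟩
    have hε0 : (0:ℝ) ≤ 1 - α := by linarith
    have hε1 : (1:ℝ) - α ≤ 1 := by linarith
    have hg : ∏ i ∈ Finset.range N, (1 - (1 - α) ^ t i) = 0 :=
      Finset.prod_eq_zero (Finset.mem_range.2 hiN) (by simp [hti])
    rw [hg]
    exact Finset.prod_nonneg fun j _ => factor_nonneg hε0 hε1 _
  push_neg at hz
  rcases hts with ⟨hNK, heq⟩ | ⟨n, hnN, hnK, hlt, heq⟩ | ⟨hKN, heq⟩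
  · -- equal sequences
    subst hNK
    exact ⟨0, by norm_num, fun α _ _ =>
      le_of_eq (Finset.prod_congr rfl fun i hi => by
        rw [heq i (Finset.mem_range.1 hi)])⟩
  · -- main case : `t n < s n`, equal before `n`
    have htn : 1 ≤ t n := Nat.one_le_iff_ne_zero.2 (hz n hnN)
    have hKpos : (0:ℝ) < 1 / (K + 1 : ℝ) := by positivity
    refine ⟨1 - 1 / (K + 1 : ℝ), by linarith, fun α hβ h1 => ?_⟩
    set ε : ℝ := 1 - α with hεdef
    have hε0 : 0 ≤ ε := by rw [hεdef]; linarith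
    have hεK : ε ≤ 1 / (K + 1 : ℝ) := by rw [hεdef]; linarith
    have hε1 : ε ≤ 1 := by
      have : (1:ℝ) / (K + 1) ≤ 1 := by
        rw [div_le_one (by positivity)]; linarith [Nat.cast_nonneg (α := ℝ) K]
      linarith
    -- split both products at `n`
    rw [Finset.range_eq_Ico, Finset.range_eq_Ico,
      ← Finset.prod_Ico_consecutive _ (Nat.zero_le n) hnK.le,
      ← Finset.prod_Ico_consecutive _ (Nat.zero_le n) hnN.le]
    have hpre : ∏ i ∈ Finset.Ico 0 n, (1 - ε ^ t i)
        = ∏ i ∈ Finset.Ico 0 n, (1 - ε ^ s i) :=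
      Finset.prod_congr rfl fun i hi => by
        rw [heq i (Finset.mem_Ico.1 hi).2]
    rw [hpre]
    refine mul_le_mul_of_nonneg_left ?_
      (Finset.prod_nonneg fun i _ => factor_nonneg hε0 hε1 _)
    -- the tail products
    have hA : ∏ i ∈ Finset.Ico n N, (1 - ε ^ t i) ≤ 1 - ε ^ t n := by
      have hmem : n ∈ Finset.Ico n N := Finset.mem_Ico.2 ⟨le_refl n, hnN⟩
      rw [← Finset.mul_prod_erase _ _ hmem]
      exact mul_le_of_le_one_right (factor_nonneg hε0 hε1 _)
        (Finset.prod_le_one (fun i _ => factor_nonneg hε0 hε1 _)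
          (fun i _ => factor_le_one hε0 _))
    have hB : (1 - ε ^ s n) ^ (K - n) ≤ ∏ i ∈ Finset.Ico n K, (1 - ε ^ s i) := by
      have : (1 - ε ^ s n) ^ (K - n)
          = ∏ _i ∈ Finset.Ico n K, (1 - ε ^ s n) := by
        rw [Finset.prod_const, Nat.card_Ico]
      rw [this]
      refine Finset.prod_le_prod (fun i _ => factor_nonneg hε0 hε1 _)
        (fun i hi => ?_)
      have hmem := Finset.mem_Ico.1 hi
      have hsn : s n ≤ s i := hs n i hmem.1 hmem.2
      have := pow_le_pow_of_le_one hε0 hε1 hsn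
      linarith
    refine le_trans hA (le_trans ?_ hB)
    -- Bernoulli + smallness of ε
    set m : ℕ := K - n with hm
    have hber : 1 - (m : ℝ) * ε ^ s n ≤ (1 - ε ^ s n) ^ m := by
      have h2 : (-2 : ℝ) ≤ -(ε ^ s n) := by
        have := pow_le_one₀ hε0 hε1 (n := s n); linarith
      have := one_add_mul_le_pow h2 m
      calc 1 - (m : ℝ) * ε ^ s n = 1 + m * (-(ε ^ s n)) := by ring
        _ ≤ (1 + -(ε ^ s n)) ^ m := this
        _ = (1 - ε ^ s n) ^ m := by ring_nf
    refine le_trans ?_ hber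
    -- remains : ε ^ t n ≥ m * ε ^ s n
    have hmK : (m : ℝ) ≤ K := by
      exact_mod_cast Nat.sub_le K n
    have hsplit : ε ^ s n = ε ^ t n * ε ^ (s n - t n) := by
      rw [← pow_add, Nat.add_sub_cancel' hlt.le]
    have hpow : ε ^ (s n - t n) ≤ ε := by
      have h1le : 1 ≤ s n - t n := by omega
      calc ε ^ (s n - t n) ≤ ε ^ 1 := pow_le_pow_of_le_one hε0 hε1 h1le
        _ = ε := pow_one ε
    have hKε : (K : ℝ) * ε ≤ 1 := by
      have : (K : ℝ) * ε ≤ (K : ℝ) * (1 / (K + 1)) :=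
        mul_le_mul_of_nonneg_left hεK (Nat.cast_nonneg K)
      have h2 : (K : ℝ) * (1 / (K + 1)) ≤ 1 := by
        rw [mul_one_div, div_le_one (by positivity)]; linarith
      exact this.trans h2
    have htpow : 0 ≤ ε ^ t n := pow_nonneg hε0 _
    have hεnn : 0 ≤ (m : ℝ) := Nat.cast_nonneg m
    nlinarith [mul_le_mul_of_nonneg_left hpow htpow,
      mul_le_mul_of_nonneg_right hmK htpow]
  · -- prefix case : `K < N`
    refine ⟨0, by norm_num, fun α h0 h1 => ?_⟩
    have hε0 : (0:ℝ) ≤ 1 - α := by linarith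
    have hε1 : (1:ℝ) - α ≤ 1 := by linarith
    obtain ⟨m, rfl⟩ : ∃ m, N = K + m := ⟨N - K, by omega⟩
    rw [Finset.prod_range_add]
    have hpre : ∏ i ∈ Finset.range K, (1 - (1 - α) ^ t i)
        = ∏ i ∈ Finset.range K, (1 - (1 - α) ^ s i) :=
      Finset.prod_congr rfl fun i hi => by
        rw [heq i (Finset.mem_range.1 hi)]
    rw [hpre]
    exact mul_le_of_le_one_right
      (Finset.prod_nonneg fun i _ => factor_nonneg hε0 hε1 _)
      (Finset.prod_le_one (fun i _ => factor_nonneg hε0 hε1 _)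
        (fun i _ => factor_le_one hε0 _))
end

section
/- Let s = s_1, …, s_K and t = t_1, …, t_N be non-decreasing sequences of non-negative integers with s ⪯ t in the sequence order, and suppose t is not a prefix of s; let n be the first index with s_n < t_n and set d = t_n - s_n. Then for every α with 1 - (N+1)^{-1/d} ≤ α ≤ 1, one has ∏_{i=1}^{K} (1 - (1-α)^{s_i}) ≤ ∏_{i=1}^{N} (1 - (1-α)^{t_i}). -/
/-- for non-decreasing sequences `s` (of length `K`) and `t`
(of length `N`) with `s ⪯ t`, where `t` is not a prefix of `s`, `n` is the
first index with `s n < t n` and `d = t n - s n`, one has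
`∏_i (1 - (1-α)^{s_i}) ≤ ∏_i (1 - (1-α)^{t_i})`
for every `α` with `1 - (N+1)^{-1/d} ≤ α ≤ 1`. -/
theorem prod_order_explicit_bound (K N : ℕ) (s t : ℕ → ℕ)
    (hs : ∀ i j, i ≤ j → j < K → s i ≤ s j)
    (ht : ∀ i j, i ≤ j → j < N → t i ≤ t j)
    (hst : SeqPrecEq K s N t)
    (n : ℕ) (hnK : n < K) (hnN : n < N)
    (hlt : s n < t n) (heq : ∀ i < n, s i = t i)
    (d : ℕ) (hd : d = t n - s n)
    (α : ℝ) (hα : 1 - ((N : ℝ) + 1) ^ (-(1 : ℝ) / (d : ℝ)) ≤ α) (hα1 : α ≤ 1) :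
    ∏ i ∈ Finset.range K, (1 - (1 - α) ^ s i) ≤
      ∏ i ∈ Finset.range N, (1 - (1 - α) ^ t i) := by
  set β : ℝ := 1 - α with hβdef
  have hβ0 : (0:ℝ) ≤ β := by simp [hβdef]; linarith
  have hd1 : 1 ≤ d := by omega
  have hdne : (d:ℝ) ≠ 0 := Nat.cast_ne_zero.mpr (by omega)
  have hN0 : (0:ℝ) < (N:ℝ) + 1 := by positivity
  have hβc : β ≤ ((N:ℝ) + 1) ^ (-(1:ℝ)/(d:ℝ)) := by simp [hβdef]; linarith
  have hcd : (((N:ℝ) + 1) ^ (-(1:ℝ)/(d:ℝ))) ^ d = ((N:ℝ)+1)⁻¹ := by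
    rw [← Real.rpow_natCast (((N:ℝ)+1) ^ (-(1:ℝ)/(d:ℝ))) d, ← Real.rpow_mul (le_of_lt hN0)]
    rw [show (-(1:ℝ)/(d:ℝ)) * d = -1 by field_simp]
    rw [Real.rpow_neg_one]
  have hβd : β ^ d ≤ ((N:ℝ)+1)⁻¹ := by
    calc β ^ d ≤ (((N:ℝ) + 1) ^ (-(1:ℝ)/(d:ℝ))) ^ d := pow_le_pow_left₀ hβ0 hβc d
    _ = _ := hcd
  have hβ1 : β ≤ 1 := by
    refine le_trans hβc (Real.rpow_le_one_of_one_le_of_nonpos (by linarith [Nat.cast_nonneg (α := ℝ) N]) ?_)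
    apply div_nonpos_of_nonpos_of_nonneg <;> [norm_num; positivity]
  have hfs : ∀ m : ℕ, 0 ≤ 1 - β ^ m ∧ 1 - β ^ m ≤ 1 := by
    intro m
    constructor
    · nlinarith [pow_le_one₀ hβ0 hβ1 (n := m)]
    · nlinarith [pow_nonneg hβ0 m]
  -- split products at n
  have hsplitL : ∏ i ∈ Finset.range K, (1 - β ^ s i)
      = (∏ i ∈ Finset.range n, (1 - β ^ s i)) * ∏ i ∈ Finset.Ico n K, (1 - β ^ s i) := by
    rw [Finset.range_eq_Ico, ← Finset.prod_Ico_consecutive _ (Nat.zero_le n) (le_of_lt hnK), Finset.range_eq_Ico]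
  have hsplitR : ∏ i ∈ Finset.range N, (1 - β ^ t i)
      = (∏ i ∈ Finset.range n, (1 - β ^ t i)) * ∏ i ∈ Finset.Ico n N, (1 - β ^ t i) := by
    rw [Finset.range_eq_Ico, ← Finset.prod_Ico_consecutive _ (Nat.zero_le n) (le_of_lt hnN), Finset.range_eq_Ico]
  rw [hsplitL, hsplitR]
  have hpre : ∏ i ∈ Finset.range n, (1 - β ^ s i) = ∏ i ∈ Finset.range n, (1 - β ^ t i) := by
    apply Finset.prod_congr rfl
    intro i hi
    rw [heq i (Finset.mem_range.mp hi)]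
  rw [hpre]
  apply mul_le_mul_of_nonneg_left _ (Finset.prod_nonneg fun i _ => (hfs (t i)).1)
  -- tail inequality
  have htn : t n = s n + d := by omega
  have hkey : ((N - n : ℕ) : ℝ) * β ^ t n ≤ β ^ s n := by
    have h1 : ((N - n : ℕ) : ℝ) ≤ (N : ℝ) := by exact_mod_cast Nat.sub_le N n
    have h2 : β ^ t n = β ^ s n * β ^ d := by rw [htn, pow_add]
    have h3 : (N:ℝ) * β ^ d ≤ 1 := by
      calc (N:ℝ) * β ^ d ≤ (N:ℝ) * ((N:ℝ)+1)⁻¹ :=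
            mul_le_mul_of_nonneg_left hβd (Nat.cast_nonneg N)
        _ ≤ 1 := by rw [mul_inv_le_iff₀ hN0]; linarith
    have hb : 0 ≤ β ^ s n := pow_nonneg hβ0 _
    have hbd : 0 ≤ β ^ d := pow_nonneg hβ0 _
    calc ((N - n : ℕ) : ℝ) * β ^ t n ≤ (N:ℝ) * β ^ t n :=
          mul_le_mul_of_nonneg_right h1 (pow_nonneg hβ0 _)
      _ = β ^ s n * ((N:ℝ) * β ^ d) := by rw [h2]; ring
      _ ≤ β ^ s n * 1 := mul_le_mul_of_nonneg_left h3 hb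
      _ = β ^ s n := mul_one _
  calc ∏ i ∈ Finset.Ico n K, (1 - β ^ s i)
      ≤ 1 - β ^ s n := by
        rw [Finset.prod_eq_prod_Ico_succ_bot hnK]
        calc (1 - β ^ s n) * ∏ i ∈ Finset.Ico (n+1) K, (1 - β ^ s i)
            ≤ (1 - β ^ s n) * 1 := by
              apply mul_le_mul_of_nonneg_left _ (hfs (s n)).1
              exact Finset.prod_le_one (fun i _ => (hfs (s i)).1) (fun i _ => (hfs (s i)).2)
          _ = 1 - β ^ s n := mul_one _
    _ ≤ 1 - ((N - n : ℕ) : ℝ) * β ^ t n := by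
        have : β ^ s n ≥ ((N - n : ℕ) : ℝ) * β ^ t n := hkey
        linarith
    _ ≤ (1 - β ^ t n) ^ (N - n) := by
        have := one_add_mul_le_pow (a := -β ^ t n) (by nlinarith [(hfs (t n)).1, (hfs (t n)).2]) (N - n)
        calc 1 - ((N - n : ℕ) : ℝ) * β ^ t n = 1 + (N - n : ℕ) * (-β ^ t n) := by ring
          _ ≤ (1 + -β ^ t n) ^ (N - n) := this
          _ = (1 - β ^ t n) ^ (N - n) := by ring_nf
    _ ≤ ∏ i ∈ Finset.Ico n N, (1 - β ^ t i) := by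
        have hcard : (Finset.Ico n N).card = N - n := Nat.card_Ico n N
        rw [← hcard, ← Finset.prod_const]
        apply Finset.prod_le_prod (fun i _ => (hfs (t n)).1)
        intro i hi
        have hni : t n ≤ t i := ht n i (Finset.mem_Ico.mp hi).1 (Finset.mem_Ico.mp hi).2
        have : β ^ t i ≤ β ^ t n := pow_le_pow_of_le_one hβ0 hβ1 hni
        linarith
end
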